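/- arXiv:1908.05115 — 12 statements merged into one kernel-verified Lean document; each statement's English description precedes it below -/
import Mathlib

section
/- Let s₀, s₁, …, s_κ be complex p×q matrices and define the reciprocal sequence r₀, …, r_κ by r₀ = s₀⁺ (Moore–Penrose inverse) and r_j = −s₀⁺ · Σ_{ℓ=0}^{j−1} s_{j−ℓ} r_ℓ for j ≥ 1. Then for all j ∈ {1,…,κ}, r_j = Σ_{ℓ=1}^{j} (−1)^ℓ Σ_{(k₁,…,k_ℓ)} s₀⁺ s_{k₁} s₀⁺ s_{k₂} ⋯ s₀⁺ s_{k_ℓ} s₀⁺, where the inner sum runs over all ordered ℓ-tuples (k₁,…,k_ℓ) of positive integers with k₁ + ⋯ + k_ℓ = j. -/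
open Matrix

/-- `X` is the Moore–Penrose inverse of `A`. -/
def IsMPInv {m n : Type*} [Fintype m] [Fintype n]
    (A : Matrix m n ℂ) (X : Matrix n m ℂ) : Prop :=
  A * X * A = A ∧ X * A * X = X ∧ (A * X)ᴴ = A * X ∧ (X * A)ᴴ = X * A

/-!
Put `a k = s₀⁺ s_k`. The recursion says `r_j = -∑_{ℓ<j} a_{j-ℓ} r_ℓ` for `j ≥ 1`, i.e. formally
`r(t) = (1 + A(t))⁻¹ s₀⁺` with `A(t) = ∑_{k≥1} a_k t^k`, and expanding `(1 + A)⁻¹ = ∑_ℓ (-A)^ℓ`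
produces the claimed sum, since the coefficient of `t^j` in `A^ℓ` is the sum of
`a_{k₁} ⋯ a_{k_ℓ}` over the compositions `(k₁, …, k_ℓ)` of `j`. Without power series: splitting
off the first part of a composition shows that this explicit sum satisfies the recursion, which
determines `r` uniquely.
-/

open Finset

def compositionTuples (ℓ j : ℕ) : Finset (Fin ℓ → ℕ) :=
  (Nat.antidiagonalTuple ℓ j).filter fun k => ∀ i, 0 < k i

lemma mem_compositionTuples {ℓ j : ℕ} {k : Fin ℓ → ℕ} :
    k ∈ compositionTuples ℓ j ↔ ∑ i, k i = j ∧ ∀ i, 0 < k i := by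
  simp [compositionTuples, Nat.mem_antidiagonalTuple]

lemma compositionTuples_eq_empty_of_lt {ℓ j : ℕ} (h : j < ℓ) : compositionTuples ℓ j = ∅ := by
  refine eq_empty_of_forall_notMem fun k hk => h.not_ge ?_
  obtain ⟨hsum, hpos⟩ := mem_compositionTuples.1 hk
  calc ℓ = ∑ _i : Fin ℓ, 1 := by simp
    _ ≤ ∑ i, k i := sum_le_sum fun i _ => hpos i
    _ = j := hsum

lemma compositionTuples_zero_left_of_pos {j : ℕ} (hj : 0 < j) : compositionTuples 0 j = ∅ := by
  obtain ⟨n, rfl⟩ := Nat.exists_eq_add_one_of_ne_zero hj.ne'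
  simp [compositionTuples, Nat.antidiagonalTuple_zero_succ]

lemma sum_compositionTuples_succ {M : Type*} [AddCommMonoid M] (ℓ j : ℕ)
    (f : (Fin (ℓ + 1) → ℕ) → M) :
    ∑ k ∈ compositionTuples (ℓ + 1) j, f k
      = ∑ i ∈ range j, ∑ k ∈ compositionTuples ℓ i, f (Fin.cons (j - i) k) := by
  rw [sum_sigma']
  refine (sum_nbij' (fun x : (_ : ℕ) × (Fin ℓ → ℕ) => Fin.cons (j - x.1) x.2)
    (fun k : Fin (ℓ + 1) → ℕ => ⟨j - k 0, Fin.tail k⟩) ?_ ?_ ?_ ?_ fun _ _ => rfl).symm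
  · rintro ⟨i, k⟩ hik
    simp only [mem_sigma, mem_range, mem_compositionTuples] at hik ⊢
    obtain ⟨hij, hsum, hpos⟩ := hik
    refine ⟨by rw [Fin.sum_cons, hsum]; omega, Fin.cases ?_ fun i => ?_⟩
    · simpa using hij
    · simpa using hpos i
  · intro k hk
    obtain ⟨hsum, hpos⟩ := mem_compositionTuples.1 hk
    rw [Fin.sum_univ_succ] at hsum
    have h0 := hpos 0
    simp only [mem_sigma, mem_range, mem_compositionTuples, Fin.tail]
    exact ⟨by omega, by omega, fun i => hpos i.succ⟩
  · rintro ⟨i, k⟩ hik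
    have : i < j := by simpa using (mem_sigma.1 hik).1
    simp [Fin.tail_cons, show j - (j - i) = i by omega]
  · intro k hk
    have : k 0 ≤ j := by
      rw [← (mem_compositionTuples.1 hk).1, Fin.sum_univ_succ]; omega
    simp [show j - (j - k 0) = k 0 by omega]

section Ring

variable {K R : Type*} [CommRing K] [Ring R] [Algebra K R] (a : ℕ → R)

/-- The coefficient of `t ^ j` in `(∑_{k ≥ 1} a k * t ^ k) ^ ℓ`. -/
def compositionSum (ℓ j : ℕ) : R :=
  ∑ k ∈ compositionTuples ℓ j, (List.ofFn fun i => a (k i)).prod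

lemma compositionSum_succ (ℓ j : ℕ) :
    compositionSum a (ℓ + 1) j = ∑ i ∈ range j, a (j - i) * compositionSum a ℓ i := by
  simp only [compositionSum, sum_compositionTuples_succ, mul_sum, List.ofFn_succ,
    Fin.cons_zero, Fin.cons_succ, List.prod_cons]

lemma compositionSum_eq_zero_of_lt {ℓ j : ℕ} (h : j < ℓ) : compositionSum a ℓ j = 0 := by
  simp [compositionSum, compositionTuples_eq_empty_of_lt h]

variable (K) in
/-- The coefficient of `t ^ j` in `(1 + ∑_{k ≥ 1} a k * t ^ k)⁻¹`. -/
def alternatingCompositionSum (j : ℕ) : R :=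
  ∑ ℓ ∈ range (j + 1), (-1 : K) ^ ℓ • compositionSum a ℓ j

lemma alternatingCompositionSum_zero : alternatingCompositionSum K a 0 = 1 := by
  simp [alternatingCompositionSum, compositionSum, compositionTuples]

lemma alternatingCompositionSum_eq_sum_Icc {j : ℕ} (hj : 0 < j) :
    alternatingCompositionSum K a j = ∑ ℓ ∈ Icc 1 j, (-1 : K) ^ ℓ • compositionSum a ℓ j := by
  rw [alternatingCompositionSum, range_eq_Ico, sum_eq_sum_Ico_succ_bot (Nat.succ_pos j),
    Nat.succ_eq_add_one, zero_add, Ico_add_one_right_eq_Icc, compositionSum,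
    compositionTuples_zero_left_of_pos hj]
  simp

lemma sum_range_neg_one_pow_smul_compositionSum {i N : ℕ} (h : i < N) :
    ∑ ℓ ∈ range N, (-1 : K) ^ ℓ • compositionSum a ℓ i = alternatingCompositionSum K a i := by
  refine (sum_subset (range_subset_range.2 h) fun ℓ hN hi => ?_).symm
  simp only [mem_range, not_lt] at hN hi
  rw [compositionSum_eq_zero_of_lt a hi, smul_zero]

theorem alternatingCompositionSum_succ (n : ℕ) :
    alternatingCompositionSum K a (n + 1)
      = -∑ i ∈ range (n + 1), a (n + 1 - i) * alternatingCompositionSum K a i := by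
  rw [alternatingCompositionSum, sum_range_succ', compositionSum,
    compositionTuples_zero_left_of_pos n.succ_pos, sum_empty, smul_zero, add_zero]
  calc ∑ ℓ ∈ range (n + 1), (-1 : K) ^ (ℓ + 1) • compositionSum a (ℓ + 1) (n + 1)
      = -∑ ℓ ∈ range (n + 1), ∑ i ∈ range (n + 1),
          a (n + 1 - i) * ((-1 : K) ^ ℓ • compositionSum a ℓ i) := by
        simp only [compositionSum_succ, pow_succ, mul_neg_one, neg_smul, smul_sum, mul_smul_comm,
          sum_neg_distrib]
    _ = _ := by
        rw [sum_comm]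
        congr 1
        refine sum_congr rfl fun i hi => ?_
        rw [← mul_sum, sum_range_neg_one_pow_smul_compositionSum a (mem_range.1 hi)]

end Ring

lemma Matrix.mul_list_prod_ofFn_mul {m n α : Type*} [Fintype m] [Fintype n] [DecidableEq m]
    [DecidableEq n] [Semiring α] {ℓ : ℕ} (X : Matrix n m α) (Y : Fin ℓ → Matrix m n α) :
    X * (List.ofFn fun i => Y i * X).prod = (List.ofFn fun i => X * Y i).prod * X := by
  induction ℓ with
  | zero => simp
  | succ ℓ ih =>
    simp only [List.ofFn_succ, List.prod_cons, Matrix.mul_assoc, ih fun i => Y i.succ]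

theorem eq_alternatingCompositionSum_mul_of_recursion {m n α : Type*} [Fintype m] [Fintype n]
    [DecidableEq n] [CommRing α] {κ : ℕ} (s : ℕ → Matrix m n α) (sInv : Matrix n m α)
    (r : ℕ → Matrix n m α) (hr0 : r 0 = sInv)
    (hr : ∀ j, 1 ≤ j → j ≤ κ → r j = -(sInv * ∑ ℓ ∈ range j, s (j - ℓ) * r ℓ)) :
    ∀ j ≤ κ, r j = alternatingCompositionSum α (fun k => sInv * s k) j * sInv := by
  intro j
  induction j using Nat.strong_induction_on with
  | _ j ih =>
    intro hjκ
    rcases j with _ | n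
    · rw [hr0, alternatingCompositionSum_zero, Matrix.one_mul]
    · rw [hr (n + 1) n.succ_pos hjκ, alternatingCompositionSum_succ, Matrix.neg_mul,
        Matrix.mul_sum, Matrix.sum_mul]
      refine congrArg _ (sum_congr rfl fun i hi => ?_)
      have hin : i < n + 1 := mem_range.1 hi
      rw [ih i hin (by omega)]
      simp only [Matrix.mul_assoc]

theorem reciprocal_explicit_formula_general {p q : ℕ} (κ : ℕ)
    (s : ℕ → Matrix (Fin p) (Fin q) ℂ)
    (sInv : Matrix (Fin q) (Fin p) ℂ)
    (r : ℕ → Matrix (Fin q) (Fin p) ℂ)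
    (hr0 : r 0 = sInv)
    (hr : ∀ j, 1 ≤ j → j ≤ κ →
      r j = -(sInv * ∑ ℓ ∈ Finset.range j, s (j - ℓ) * r ℓ)) :
    ∀ j, 1 ≤ j → j ≤ κ →
      r j = ∑ ℓ ∈ Finset.Icc 1 j, (-1 : ℂ) ^ ℓ •
        ∑ k ∈ (Finset.Nat.antidiagonalTuple ℓ j).filter (fun k => ∀ i, 0 < k i),
          sInv * (List.ofFn fun i : Fin ℓ => s (k i) * sInv).prod := by
  intro j hj hjκ
  rw [eq_alternatingCompositionSum_mul_of_recursion s sInv r hr0 hr j hjκ,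
    alternatingCompositionSum_eq_sum_Icc _ hj, Matrix.sum_mul]
  refine sum_congr rfl fun ℓ _ => ?_
  rw [Matrix.smul_mul, compositionSum, Matrix.sum_mul]
  refine congrArg _ (sum_congr rfl fun k _ => ?_)
  exact (Matrix.mul_list_prod_ofFn_mul sInv fun i => s (k i)).symm

/-- Explicit formula for the reciprocal sequence (Theorem on non-recursive
representation of the reciprocal sequence). -/
theorem reciprocal_explicit_formula {p q : ℕ} (κ : ℕ)
    (s : ℕ → Matrix (Fin p) (Fin q) ℂ)
    (sInv : Matrix (Fin q) (Fin p) ℂ) (hs : IsMPInv (s 0) sInv)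
    (r : ℕ → Matrix (Fin q) (Fin p) ℂ)
    (hr0 : r 0 = sInv)
    (hr : ∀ j, 1 ≤ j → j ≤ κ →
      r j = -(sInv * ∑ ℓ ∈ Finset.range j, s (j - ℓ) * r ℓ)) :
    ∀ j, 1 ≤ j → j ≤ κ →
      r j = ∑ ℓ ∈ Finset.Icc 1 j, (-1 : ℂ) ^ ℓ •
        ∑ k ∈ (Finset.Nat.antidiagonalTuple ℓ j).filter (fun k => ∀ i, 0 < k i),
          sInv * (List.ofFn fun i : Fin ℓ => s (k i) * sInv).prod :=
  reciprocal_explicit_formula_general κ s sInv r hr0 hr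
end

section
/- Let s₀, …, s_κ be complex p×q matrices (κ ≥ 1) with reciprocal sequence r₀, …, r_κ. Then for every m ∈ {1,…,κ}, r_m = −(Σ_{ℓ=1}^{m} r_{m−ℓ} s_ℓ) s₀⁺. In other words, the reciprocal sequence also satisfies the dual recursion with multiplication by the original sequence on the right. -/
open Matrix

/-- The reciprocal sequence satisfies the dual recursion with multiplication by
the original sequence on the right. -/
theorem reciprocal_dual_recursion {p q : ℕ} (κ : ℕ) (hκ : 1 ≤ κ)
    (s : ℕ → Matrix (Fin p) (Fin q) ℂ)
    (sInv : Matrix (Fin q) (Fin p) ℂ) (hs : IsMPInv (s 0) sInv)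
    (r : ℕ → Matrix (Fin q) (Fin p) ℂ)
    (hr0 : r 0 = sInv)
    (hr : ∀ j, 1 ≤ j → j ≤ κ →
      r j = -(sInv * ∑ ℓ ∈ Finset.range j, s (j - ℓ) * r ℓ)) :
    ∀ m, 1 ≤ m → m ≤ κ →
      r m = -((∑ ℓ ∈ Finset.Icc 1 m, r (m - ℓ) * s ℓ) * sInv) := by
  have key : ∀ n, 1 ≤ n → n ≤ κ →
      sInv * ∑ j ∈ Finset.range n, s (n - j) * r j = -r n := by
    intro n h1 h2
    rw [hr n h1 h2, neg_neg]
  intro m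
  induction m using Nat.strong_induction_on with
  | _ m IH =>
  intro hm1 hmκ
  -- main computation for the tail sum
  have hmain : sInv * ∑ ℓ ∈ Finset.Ico 1 m, s (m - ℓ) * r ℓ
      = ∑ k ∈ Finset.Icc 1 (m - 1), r (m - k) * s k * sInv := by
    have hstep : ∀ ℓ ∈ Finset.Ico 1 m,
        s (m - ℓ) * r ℓ
          = ∑ k ∈ Finset.Icc 1 ℓ, -(s (m - ℓ) * r (ℓ - k) * (s k * sInv)) := by
      intro ℓ hℓ
      simp only [Finset.mem_Ico] at hℓ
      rw [IH ℓ hℓ.2 hℓ.1 (le_trans hℓ.2.le hmκ)]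
      simp [Matrix.sum_mul, Matrix.mul_sum, Matrix.mul_assoc]
    rw [Finset.sum_congr rfl hstep]
    rw [Finset.sum_comm' (t' := Finset.Icc 1 (m - 1))
        (s' := fun k => Finset.Icc k (m - 1))
        (fun x y => by simp only [Finset.mem_Ico, Finset.mem_Icc]; omega)]
    rw [Matrix.mul_sum]
    refine Finset.sum_congr rfl ?_
    intro k hk
    simp only [Finset.mem_Icc] at hk
    have hIcc : Finset.Icc k (m - 1) = Finset.Ico k m := by
      ext x; simp only [Finset.mem_Icc, Finset.mem_Ico]; omega
    have hT : ∑ ℓ ∈ Finset.Icc k (m - 1), -(s (m - ℓ) * r (ℓ - k) * (s k * sInv))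
        = -((∑ j ∈ Finset.range (m - k), s ((m - k) - j) * r j) * (s k * sInv)) := by
      rw [hIcc, Finset.sum_Ico_eq_sum_range, Finset.sum_neg_distrib, ← Matrix.sum_mul]
      congr 2
      refine Finset.sum_congr rfl ?_
      intro j hj
      have e1 : m - (k + j) = m - k - j := by omega
      have e2 : k + j - k = j := by omega
      rw [e1, e2]
    rw [hT, Matrix.mul_neg, ← Matrix.mul_assoc, key (m - k) (by omega) (by omega), Matrix.neg_mul, neg_neg,
      Matrix.mul_assoc]
  -- rewrite the left-hand side using the recursion
  rw [hr m hm1 hmκ]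
  have hrange : Finset.range m = insert 0 (Finset.Ico 1 m) := by
    ext x; simp only [Finset.mem_range, Finset.mem_insert, Finset.mem_Ico]; omega
  rw [hrange, Finset.sum_insert (by simp)]
  have hIcc1 : Finset.Icc 1 m = insert m (Finset.Icc 1 (m - 1)) := by
    ext x; simp only [Finset.mem_Icc, Finset.mem_insert]; omega
  rw [hIcc1, Finset.sum_insert (by simp only [Finset.mem_Icc]; omega)]
  rw [Matrix.mul_add, hmain, Nat.sub_self, Nat.sub_zero, hr0]
  rw [Matrix.add_mul, Matrix.sum_mul, neg_add, neg_add]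
  congr 1
  rw [Matrix.mul_assoc]
end

section
/- Let s₀, …, s_κ be complex p×q matrices with reciprocal sequence r₀, …, r_κ. Then the sequence (r_j*)_{j=0}^κ of conjugate transposes coincides with the reciprocal sequence of the sequence (s_j*)_{j=0}^κ. -/
open Matrix

/-- Swapping the two indices of a sum over the triangle `{(a,b) : a + b ≤ n}`. -/
theorem tri_swap {M : Type*} [AddCommMonoid M] (n : ℕ) (f : ℕ → ℕ → M) :
    (∑ a ∈ Finset.range (n+1), ∑ b ∈ Finset.range (n+1-a), f a b) =
      ∑ b ∈ Finset.range (n+1), ∑ a ∈ Finset.range (n+1-b), f a b := by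
  rw [Finset.sum_sigma', Finset.sum_sigma']
  refine Finset.sum_nbij' (fun x ↦ ⟨x.2, x.1⟩) (fun x ↦ ⟨x.2, x.1⟩) ?_ ?_ (fun _ _ ↦ rfl)
    (fun _ _ ↦ rfl) (fun _ _ ↦ rfl) <;>
  simp only [Finset.mem_range, Sigma.forall, Finset.mem_sigma] <;>
  rintro a b ⟨h₁, h₂⟩ <;>
  omega

/-- The conjugate transposes of the reciprocal sequence form the reciprocal
sequence of the conjugate-transposed sequence. -/
theorem reciprocal_conjTranspose {p q : ℕ} (κ : ℕ)
    (s : ℕ → Matrix (Fin p) (Fin q) ℂ)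
    (sInv : Matrix (Fin q) (Fin p) ℂ) (hs : IsMPInv (s 0) sInv)
    (r : ℕ → Matrix (Fin q) (Fin p) ℂ)
    (hr0 : r 0 = sInv)
    (hr : ∀ j, 1 ≤ j → j ≤ κ →
      r j = -(sInv * ∑ ℓ ∈ Finset.range j, s (j - ℓ) * r ℓ))
    (r' : ℕ → Matrix (Fin p) (Fin q) ℂ)
    (hr'0 : r' 0 = sInvᴴ)
    (hr' : ∀ j, 1 ≤ j → j ≤ κ →
      r' j = -(sInvᴴ * ∑ ℓ ∈ Finset.range j, (s (j - ℓ))ᴴ * r' ℓ)) :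
    ∀ j, j ≤ κ → r' j = (r j)ᴴ := by
  have m1 : sInv * s 0 * sInv = sInv := hs.2.1
  -- left-stability of r
  have hA : ∀ j, j ≤ κ → sInv * s 0 * r j = r j := by
    intro j hj
    rcases Nat.eq_zero_or_pos j with h0 | h1
    · subst h0; rw [hr0]; exact m1
    · rw [hr j h1 hj, Matrix.mul_neg, ← Matrix.mul_assoc (sInv * s 0) sInv, m1]
  -- conjugate-transposed recursion for r'
  have htrec : ∀ j, 1 ≤ j → j ≤ κ →
      (r' j)ᴴ = -((∑ ℓ ∈ Finset.range j, (r' ℓ)ᴴ * s (j - ℓ)) * sInv) := by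
    intro j h1 h2
    rw [hr' j h1 h2]
    simp [Matrix.conjTranspose_neg, Matrix.conjTranspose_mul, Matrix.conjTranspose_sum]
  -- right-stability of (r')ᴴ
  have hB : ∀ j, j ≤ κ → (r' j)ᴴ * s 0 * sInv = (r' j)ᴴ := by
    intro j hj
    rcases Nat.eq_zero_or_pos j with h0 | h1
    · subst h0; rw [hr'0, conjTranspose_conjTranspose]; exact m1
    · rw [htrec j h1 hj, Matrix.neg_mul, Matrix.neg_mul, Matrix.mul_assoc,
        Matrix.mul_assoc, ← Matrix.mul_assoc sInv (s 0) sInv, m1]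
  -- convolution annihilation, left
  have hC : ∀ k, 1 ≤ k → k ≤ κ →
      sInv * (∑ ℓ ∈ Finset.range (k+1), s (k - ℓ) * r ℓ) = 0 := by
    intro k h1 h2
    rw [Finset.sum_range_succ, Matrix.mul_add, Nat.sub_self]
    have e1 : sInv * (∑ ℓ ∈ Finset.range k, s (k - ℓ) * r ℓ) = -(r k) := by
      rw [hr k h1 h2, neg_neg]
    rw [e1, ← Matrix.mul_assoc sInv (s 0) (r k), hA k h2, neg_add_cancel]
  -- convolution annihilation, right
  have hD : ∀ k, 1 ≤ k → k ≤ κ →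
      (∑ ℓ ∈ Finset.range (k+1), (r' ℓ)ᴴ * s (k - ℓ)) * sInv = 0 := by
    intro k h1 h2
    rw [Finset.sum_range_succ, Matrix.add_mul, Nat.sub_self]
    have e1 : (∑ ℓ ∈ Finset.range k, (r' ℓ)ᴴ * s (k - ℓ)) * sInv = -((r' k)ᴴ) := by
      rw [htrec k h1 h2, neg_neg]
    rw [e1, hB k h2, neg_add_cancel]
  -- the key double-sum identity
  have key : ∀ j, j ≤ κ → (r' j)ᴴ = r j := by
    intro j hj
    have hE : (∑ a ∈ Finset.range (j+1), ∑ ℓ ∈ Finset.range (j+1-a),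
        (r' a)ᴴ * (s (j - a - ℓ) * r ℓ)) = (r' j)ᴴ := by
      rw [Finset.sum_range_succ]
      have hz : ∀ a ∈ Finset.range j,
          (∑ ℓ ∈ Finset.range (j+1-a), (r' a)ᴴ * (s (j - a - ℓ) * r ℓ)) = 0 := by
        intro a ha
        rw [Finset.mem_range] at ha
        have h1 : 1 ≤ j - a := by omega
        have h2 : j - a ≤ κ := by omega
        have hrange : j + 1 - a = (j - a) + 1 := by omega
        rw [← Matrix.mul_sum, hrange, ← hB a (by omega),
          Matrix.mul_assoc ((r' a)ᴴ * s 0) sInv, hC (j - a) h1 h2, Matrix.mul_zero]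
      rw [Finset.sum_congr rfl hz, Finset.sum_const_zero, zero_add]
      have h11 : j + 1 - j = 1 := by omega
      rw [h11, Finset.sum_range_one, Nat.sub_self, Nat.sub_zero, hr0,
        ← Matrix.mul_assoc ((r' j)ᴴ) (s 0) sInv, hB j hj]
    have hF : (∑ a ∈ Finset.range (j+1), ∑ ℓ ∈ Finset.range (j+1-a),
        (r' a)ᴴ * (s (j - a - ℓ) * r ℓ)) = r j := by
      rw [tri_swap j (fun a ℓ => (r' a)ᴴ * (s (j - a - ℓ) * r ℓ))]
      rw [Finset.sum_range_succ]
      have hz : ∀ ℓ ∈ Finset.range j,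
          (∑ a ∈ Finset.range (j+1-ℓ), (r' a)ᴴ * (s (j - a - ℓ) * r ℓ)) = 0 := by
        intro ℓ hℓ
        rw [Finset.mem_range] at hℓ
        have h1 : 1 ≤ j - ℓ := by omega
        have h2 : j - ℓ ≤ κ := by omega
        have hrange : j + 1 - ℓ = (j - ℓ) + 1 := by omega
        have hterm : ∀ a ∈ Finset.range ((j - ℓ) + 1),
            (r' a)ᴴ * (s (j - a - ℓ) * r ℓ) = ((r' a)ᴴ * s (j - ℓ - a)) * r ℓ := by
          intro a _
          have hidx : j - a - ℓ = j - ℓ - a := by omega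
          rw [hidx, ← Matrix.mul_assoc]
        rw [hrange, Finset.sum_congr rfl hterm, ← Matrix.sum_mul,
          ← hA ℓ (by omega), ← Matrix.mul_assoc _ (sInv * s 0) (r ℓ),
          ← Matrix.mul_assoc _ sInv (s 0), hD (j - ℓ) h1 h2, Matrix.zero_mul,
          Matrix.zero_mul]
      rw [Finset.sum_congr rfl hz, Finset.sum_const_zero, zero_add]
      have h11 : j + 1 - j = 1 := by omega
      rw [h11, Finset.sum_range_one, hr'0, conjTranspose_conjTranspose]
      have : j - 0 - j = 0 := by omega
      rw [this, ← Matrix.mul_assoc sInv (s 0) (r j), hA j hj]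
    rw [hE.symm.trans hF]
  intro j hj
  rw [← key j hj, conjTranspose_conjTranspose]
end

section
/- Let s₀, …, s_κ be complex p×q matrices with reciprocal sequence r₀, …, r_κ. Let v_j = Σ_{ℓ=0}^{j} r_ℓ s_{j−ℓ} be the Cauchy product of (r_j) with (s_j), and let w_j = Σ_{ℓ=0}^{j} s_ℓ r_{j−ℓ} be the Cauchy product of (s_j) with (r_j). Then for all j, k ∈ {0,…,κ}: v_j r_k = δ_{0j} r_k and r_k w_j = δ_{0j} r_k, where δ denotes the Kronecker delta. -/
/-! The recursion writes every `r k` as `s₀⁺ * _`, so `s₀⁺ s₀ s₀⁺ = s₀⁺` gives `s₀⁺ s₀ r k = r k`,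
and an induction gives `r k s₀ s₀⁺ = r k`. With the first identity the recursion says exactly
that `s₀⁺ (s ⋆ r) j = δ_{0j} s₀⁺`; with the second this yields `r k w j = δ_{0j} r k` and
`r ⋆ (s ⋆ r) = r`. By associativity `(r ⋆ s) ⋆ r = r`, which determines `v j r₀ = v j s₀⁺`
inductively as `δ_{0j} s₀⁺`, and then `v j r k = v j s₀⁺ s₀ r k = δ_{0j} r k`. -/

open Matrix

open Finset

section CauchyProduct

variable {R : Type*} {l m n o : Type*}

def cauchyProduct [NonUnitalNonAssocSemiring R] [Fintype m]
    (a : ℕ → Matrix l m R) (b : ℕ → Matrix m n R) (j : ℕ) : Matrix l n R :=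
  ∑ x ∈ antidiagonal j, a x.1 * b x.2

variable [Fintype m]

theorem cauchyProduct_eq_sum_range [NonUnitalNonAssocSemiring R]
    (a : ℕ → Matrix l m R) (b : ℕ → Matrix m n R) (j : ℕ) :
    cauchyProduct a b j = ∑ ℓ ∈ range (j + 1), a ℓ * b (j - ℓ) :=
  Nat.sum_antidiagonal_eq_sum_range_succ (fun i k => a i * b k) j

theorem cauchyProduct_eq_add_sum_range [NonUnitalNonAssocSemiring R]
    (a : ℕ → Matrix l m R) (b : ℕ → Matrix m n R) (j : ℕ) :
    cauchyProduct a b j = a 0 * b j + ∑ ℓ ∈ range j, a (j - ℓ) * b ℓ := by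
  rw [cauchyProduct, ← Nat.sum_antidiagonal_swap]
  simp only [Prod.fst_swap, Prod.snd_swap]
  rw [Nat.sum_antidiagonal_eq_sum_range_succ (fun i k => a k * b i), sum_range_succ,
    Nat.sub_self, add_comm]

theorem cauchyProduct_assoc [NonUnitalSemiring R] [Fintype n]
    (a : ℕ → Matrix l m R) (b : ℕ → Matrix m n R) (c : ℕ → Matrix n o R) (j : ℕ) :
    cauchyProduct (cauchyProduct a b) c j = cauchyProduct a (cauchyProduct b c) j := by
  simp only [cauchyProduct, Matrix.sum_mul, Matrix.mul_sum, sum_sigma']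
  apply sum_nbij' (fun ⟨⟨_i, k⟩, ⟨a, b⟩⟩ ↦ ⟨(a, b + k), (b, k)⟩)
    (fun ⟨⟨i, _k⟩, ⟨a, b⟩⟩ ↦ ⟨(i + a, b), (i, a)⟩) <;>
    aesop (add simp [add_assoc, Matrix.mul_assoc])

end CauchyProduct

structure IsReciprocalUpTo {R : Type*} [Ring R] {m n : Type*} [Fintype m] [Fintype n]
    (κ : ℕ) (s : ℕ → Matrix m n R) (sInv : Matrix n m R) (r : ℕ → Matrix n m R) : Prop where
  apply_zero : r 0 = sInv
  apply_of_one_le : ∀ j, 1 ≤ j → j ≤ κ → r j = -(sInv * ∑ ℓ ∈ range j, s (j - ℓ) * r ℓ)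

namespace IsReciprocalUpTo

variable {R : Type*} [Ring R] {m n : Type*} [Fintype m] [Fintype n] {κ : ℕ}
  {s : ℕ → Matrix m n R} {sInv : Matrix n m R} {r : ℕ → Matrix n m R}

theorem exists_eq_inv_mul (h : IsReciprocalUpTo κ s sInv r)
    (hInv : sInv * s 0 * sInv = sInv) {k : ℕ} (hk : k ≤ κ) :
    ∃ t : Matrix m m R, r k = sInv * t := by
  rcases Nat.eq_zero_or_pos k with rfl | hpos
  · exact ⟨s 0 * sInv, by rw [h.apply_zero, ← Matrix.mul_assoc sInv, hInv]⟩
  · exact ⟨_, (h.apply_of_one_le k hpos hk).trans (Matrix.mul_neg _ _).symm⟩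

theorem inv_mul_head_mul (h : IsReciprocalUpTo κ s sInv r)
    (hInv : sInv * s 0 * sInv = sInv) {k : ℕ} (hk : k ≤ κ) : sInv * s 0 * r k = r k := by
  obtain ⟨t, ht⟩ := h.exists_eq_inv_mul hInv hk
  rw [ht, ← Matrix.mul_assoc, hInv]

theorem mul_head_mul_inv (h : IsReciprocalUpTo κ s sInv r)
    (hInv : sInv * s 0 * sInv = sInv) {k : ℕ} (hk : k ≤ κ) : r k * s 0 * sInv = r k := by
  induction k using Nat.strong_induction_on with
  | _ k ih =>
  rcases Nat.eq_zero_or_pos k with rfl | hpos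
  · rw [h.apply_zero, hInv]
  · have hsum : (∑ ℓ ∈ range k, s (k - ℓ) * r ℓ) * s 0 * sInv
        = ∑ ℓ ∈ range k, s (k - ℓ) * r ℓ := by
      simp only [Matrix.sum_mul]
      refine sum_congr rfl fun ℓ hℓ => ?_
      have hℓk := mem_range.mp hℓ
      rw [Matrix.mul_assoc, Matrix.mul_assoc, ← Matrix.mul_assoc (r ℓ), ih ℓ hℓk (by omega)]
    rw [h.apply_of_one_le k hpos hk, Matrix.neg_mul, Matrix.neg_mul, Matrix.mul_assoc sInv,
      Matrix.mul_assoc sInv, hsum]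

theorem inv_mul_cauchyProduct (h : IsReciprocalUpTo κ s sInv r)
    (hInv : sInv * s 0 * sInv = sInv) {j : ℕ} (hj : j ≤ κ) :
    sInv * cauchyProduct s r j = if j = 0 then sInv else 0 := by
  rw [cauchyProduct_eq_add_sum_range, Matrix.mul_add, ← Matrix.mul_assoc,
    h.inv_mul_head_mul hInv hj]
  split_ifs with hj0
  · subst hj0
    rw [h.apply_zero, sum_range_zero, Matrix.mul_zero, add_zero]
  · rw [h.apply_of_one_le j (Nat.one_le_iff_ne_zero.mpr hj0) hj, neg_add_cancel]

theorem mul_cauchyProduct (h : IsReciprocalUpTo κ s sInv r)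
    (hInv : sInv * s 0 * sInv = sInv) {j k : ℕ} (hj : j ≤ κ) (hk : k ≤ κ) :
    r k * cauchyProduct s r j = if j = 0 then r k else 0 := by
  conv_lhs => rw [← h.mul_head_mul_inv hInv hk, Matrix.mul_assoc, h.inv_mul_cauchyProduct hInv hj]
  split_ifs
  · exact h.mul_head_mul_inv hInv hk
  · exact Matrix.mul_zero _

theorem cauchyProduct_cauchyProduct (h : IsReciprocalUpTo κ s sInv r)
    (hInv : sInv * s 0 * sInv = sInv) {j : ℕ} (hj : j ≤ κ) :
    cauchyProduct r (cauchyProduct s r) j = r j := by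
  have hterm : ∀ x ∈ antidiagonal j,
      r x.1 * cauchyProduct s r x.2 = if x.2 = 0 then r x.1 else 0 := fun x hx => by
    have := HasAntidiagonal.mem_antidiagonal.mp hx
    exact h.mul_cauchyProduct hInv (by omega) (by omega)
  rw [cauchyProduct, sum_congr rfl hterm, sum_eq_single_of_mem (j, 0) (by simp), if_pos rfl]
  rintro ⟨a, b⟩ hx hne
  rw [HasAntidiagonal.mem_antidiagonal] at hx
  exact if_neg (by rintro rfl; exact hne (by simp_all))

theorem cauchyProduct_mul (h : IsReciprocalUpTo κ s sInv r)
    (hInv : sInv * s 0 * sInv = sInv) {j k : ℕ} (hj : j ≤ κ) (hk : k ≤ κ) :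
    cauchyProduct r s j * r k = if j = 0 then r k else 0 := by
  induction j using Nat.strong_induction_on generalizing k with
  | _ j ih =>
  suffices hzero : cauchyProduct r s j * sInv = if j = 0 then sInv else 0 by
    conv_lhs => rw [← h.inv_mul_head_mul hInv hk, ← Matrix.mul_assoc, ← Matrix.mul_assoc, hzero]
    split_ifs
    · exact h.inv_mul_head_mul hInv hk
    · rw [Matrix.zero_mul, Matrix.zero_mul]
  have hlower : ∀ a ∈ range j, cauchyProduct r s a * r (j - a) = if a = 0 then r (j - a) else 0 :=
    fun a ha => ih a (mem_range.mp ha) (by have := mem_range.mp ha; omega) (by omega)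
  have hassoc := (cauchyProduct_assoc r s r j).trans (h.cauchyProduct_cauchyProduct hInv hj)
  rw [cauchyProduct_eq_sum_range, sum_range_succ, Nat.sub_self, h.apply_zero,
    sum_congr rfl hlower, sum_ite_eq' (range j) 0] at hassoc
  rcases Nat.eq_zero_or_pos j with rfl | hpos
  · rw [if_neg notMem_range_self, zero_add, h.apply_zero] at hassoc
    rwa [if_pos rfl]
  · rw [if_pos (mem_range.mpr hpos), Nat.sub_zero, add_eq_left] at hassoc
    rwa [if_neg hpos.ne']

end IsReciprocalUpTo

/-- Cauchy products of a sequence with its reciprocal sequence act like the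
Kronecker delta on the reciprocal sequence. -/
theorem cauchyProduct_reciprocal {p q : ℕ} (κ : ℕ)
    (s : ℕ → Matrix (Fin p) (Fin q) ℂ)
    (sInv : Matrix (Fin q) (Fin p) ℂ) (hs : IsMPInv (s 0) sInv)
    (r : ℕ → Matrix (Fin q) (Fin p) ℂ)
    (hr0 : r 0 = sInv)
    (hr : ∀ j, 1 ≤ j → j ≤ κ →
      r j = -(sInv * ∑ ℓ ∈ Finset.range j, s (j - ℓ) * r ℓ))
    (v : ℕ → Matrix (Fin q) (Fin q) ℂ)
    (hv : ∀ j, j ≤ κ → v j = ∑ ℓ ∈ Finset.range (j+1), r ℓ * s (j - ℓ))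
    (w : ℕ → Matrix (Fin p) (Fin p) ℂ)
    (hw : ∀ j, j ≤ κ → w j = ∑ ℓ ∈ Finset.range (j+1), s ℓ * r (j - ℓ)) :
    ∀ j k, j ≤ κ → k ≤ κ →
      v j * r k = (if j = 0 then r k else 0) ∧
      r k * w j = (if j = 0 then r k else 0) := by
  have hrec : IsReciprocalUpTo κ s sInv r := ⟨hr0, hr⟩
  intro j k hj hk
  rw [hv j hj, hw j hj, ← cauchyProduct_eq_sum_range, ← cauchyProduct_eq_sum_range]
  exact ⟨hrec.cauchyProduct_mul hs.2.1 hj hk, hrec.mul_cauchyProduct hs.2.1 hj hk⟩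
end

section
/- Let s₀, …, s_κ be complex p×q matrices. For m ∈ {0,…,κ}, let S_m denote the lower triangular (m+1)×(m+1) block Toeplitz matrix with block entries (S_m)_{j,k} = s_{j−k} for j ≥ k and 0 otherwise, and let S_m^♯ be the analogous matrix built from the reciprocal sequence r₀, …, r_κ. Then S_m^♯ S_m S_m^♯ = S_m^♯ for all m ∈ {0,…,κ}, i.e., S_m^♯ is a {2}-generalized inverse of S_m. The analogous identity holds for the upper triangular block Toeplitz matrices. -/
open Matrix

/-- The lower triangular block Toeplitz matrix built from a sequence. -/
def toepL {p q : ℕ} (s : ℕ → Matrix (Fin p) (Fin q) ℂ) (m : ℕ) :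
    Matrix (Fin (m+1) × Fin p) (Fin (m+1) × Fin q) ℂ :=
  Matrix.of fun a b =>
    if (b.1 : ℕ) ≤ (a.1 : ℕ) then s ((a.1 : ℕ) - (b.1 : ℕ)) a.2 b.2 else 0

/-- The upper triangular block Toeplitz matrix built from a sequence. -/
def toepU {p q : ℕ} (s : ℕ → Matrix (Fin p) (Fin q) ℂ) (m : ℕ) :
    Matrix (Fin (m+1) × Fin p) (Fin (m+1) × Fin q) ℂ :=
  Matrix.of fun a b =>
    if (a.1 : ℕ) ≤ (b.1 : ℕ) then s ((b.1 : ℕ) - (a.1 : ℕ)) a.2 b.2 else 0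

/-- The block Hankel matrix `(s_{j+k+d})_{j,k=0}^n` built from a sequence
(`d = 0` gives `H_n`, `d = 1` gives `K_n`, `d = 2` gives `G_n`). -/
def hank {p q : ℕ} (s : ℕ → Matrix (Fin p) (Fin q) ℂ) (d n : ℕ) :
    Matrix (Fin (n+1) × Fin p) (Fin (n+1) × Fin q) ℂ :=
  Matrix.of fun a b => s ((a.1 : ℕ) + (b.1 : ℕ) + d) a.2 b.2

lemma toepL_mul {p q u : ℕ} (A : ℕ → Matrix (Fin p) (Fin q) ℂ)
    (B : ℕ → Matrix (Fin q) (Fin u) ℂ) (m : ℕ) :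
    toepL A m * toepL B m
      = toepL (fun n => ∑ i ∈ Finset.range (n+1), A (n-i) * B i) m := by
  ext ⟨j, a⟩ ⟨k, b⟩
  rw [Matrix.mul_apply, Fintype.sum_prod_type]
  have step : ∀ x : Fin (m+1),
      (∑ c : Fin q, toepL A m (j, a) (x, c) * toepL B m (x, c) (k, b))
      = if (k:ℕ) ≤ (x:ℕ) ∧ (x:ℕ) ≤ (j:ℕ)
          then (A ((j:ℕ)-(x:ℕ)) * B ((x:ℕ)-(k:ℕ))) a b else 0 := by
    intro x
    simp only [toepL, Matrix.of_apply, Matrix.mul_apply]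
    by_cases h1 : (x:ℕ) ≤ (j:ℕ) <;> by_cases h2 : (k:ℕ) ≤ (x:ℕ) <;>
      simp [h1, h2]
  rw [Finset.sum_congr rfl fun x _ => step x]
  rw [Fin.sum_univ_eq_sum_range
    (fun n => if (k:ℕ) ≤ n ∧ n ≤ (j:ℕ) then (A ((j:ℕ)-n) * B (n-(k:ℕ))) a b else 0)]
  simp only [toepL, Matrix.of_apply]
  by_cases hkj : (k:ℕ) ≤ (j:ℕ)
  · rw [if_pos hkj, Finset.sum_ite, Finset.sum_const_zero, add_zero]
    have hfil : (Finset.range (m+1)).filter (fun n => (k:ℕ) ≤ n ∧ n ≤ (j:ℕ))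
        = Finset.Ico (k:ℕ) ((j:ℕ)+1) := by
      ext n
      simp only [Finset.mem_filter, Finset.mem_range, Finset.mem_Ico]
      have := j.isLt
      omega
    rw [hfil, Finset.sum_Ico_eq_sum_range]
    simp only [Matrix.sum_apply]
    rw [show (j:ℕ) + 1 - (k:ℕ) = (j:ℕ)-(k:ℕ) + 1 by omega]
    apply Finset.sum_congr rfl
    intro i hi
    simp only [Finset.mem_range] at hi
    rw [show (j:ℕ) - ((k:ℕ) + i) = (j:ℕ)-(k:ℕ) - i by omega,
        show (k:ℕ) + i - (k:ℕ) = i by omega]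
  · rw [if_neg hkj]
    apply Finset.sum_eq_zero
    intro n hn
    rw [if_neg]; omega

lemma toepU_mul {p q u : ℕ} (A : ℕ → Matrix (Fin p) (Fin q) ℂ)
    (B : ℕ → Matrix (Fin q) (Fin u) ℂ) (m : ℕ) :
    toepU A m * toepU B m
      = toepU (fun n => ∑ i ∈ Finset.range (n+1), A i * B (n-i)) m := by
  ext ⟨j, a⟩ ⟨k, b⟩
  rw [Matrix.mul_apply, Fintype.sum_prod_type]
  have step : ∀ x : Fin (m+1),
      (∑ c : Fin q, toepU A m (j, a) (x, c) * toepU B m (x, c) (k, b))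
      = if (j:ℕ) ≤ (x:ℕ) ∧ (x:ℕ) ≤ (k:ℕ)
          then (A ((x:ℕ)-(j:ℕ)) * B ((k:ℕ)-(x:ℕ))) a b else 0 := by
    intro x
    simp only [toepU, Matrix.of_apply, Matrix.mul_apply]
    by_cases h1 : (j:ℕ) ≤ (x:ℕ) <;> by_cases h2 : (x:ℕ) ≤ (k:ℕ) <;>
      simp [h1, h2]
  rw [Finset.sum_congr rfl fun x _ => step x]
  rw [Fin.sum_univ_eq_sum_range
    (fun n => if (j:ℕ) ≤ n ∧ n ≤ (k:ℕ) then (A (n-(j:ℕ)) * B ((k:ℕ)-n)) a b else 0)]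
  simp only [toepU, Matrix.of_apply]
  by_cases hjk : (j:ℕ) ≤ (k:ℕ)
  · rw [if_pos hjk, Finset.sum_ite, Finset.sum_const_zero, add_zero]
    have hfil : (Finset.range (m+1)).filter (fun n => (j:ℕ) ≤ n ∧ n ≤ (k:ℕ))
        = Finset.Ico (j:ℕ) ((k:ℕ)+1) := by
      ext n
      simp only [Finset.mem_filter, Finset.mem_range, Finset.mem_Ico]
      have := k.isLt
      omega
    rw [hfil, Finset.sum_Ico_eq_sum_range]
    simp only [Matrix.sum_apply]
    rw [show (k:ℕ) + 1 - (j:ℕ) = (k:ℕ)-(j:ℕ) + 1 by omega]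
    apply Finset.sum_congr rfl
    intro i hi
    simp only [Finset.mem_range] at hi
    rw [show (j:ℕ) + i - (j:ℕ) = i by omega,
        show (k:ℕ) - ((j:ℕ) + i) = (k:ℕ)-(j:ℕ) - i by omega]
  · rw [if_neg hjk]
    apply Finset.sum_eq_zero
    intro n hn
    rw [if_neg]; omega

lemma toepL_congr {p q : ℕ} {A B : ℕ → Matrix (Fin p) (Fin q) ℂ} {m : ℕ}
    (h : ∀ n ≤ m, A n = B n) : toepL A m = toepL B m := by
  ext ⟨j, a⟩ ⟨k, b⟩
  simp only [toepL, Matrix.of_apply]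
  split
  · rw [h _ (by have := j.isLt; omega)]
  · rfl

lemma toepU_congr {p q : ℕ} {A B : ℕ → Matrix (Fin p) (Fin q) ℂ} {m : ℕ}
    (h : ∀ n ≤ m, A n = B n) : toepU A m = toepU B m := by
  ext ⟨j, a⟩ ⟨k, b⟩
  simp only [toepU, Matrix.of_apply]
  split
  · rw [h _ (by have := k.isLt; omega)]
  · rfl

/-- The block Toeplitz matrices of the reciprocal sequence are {2}-generalized
inverses of those of the original sequence. -/
theorem toeplitz_reciprocal_genInv {p q : ℕ} (κ : ℕ)
    (s : ℕ → Matrix (Fin p) (Fin q) ℂ)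
    (sInv : Matrix (Fin q) (Fin p) ℂ) (hs : IsMPInv (s 0) sInv)
    (r : ℕ → Matrix (Fin q) (Fin p) ℂ)
    (hr0 : r 0 = sInv)
    (hr : ∀ j, 1 ≤ j → j ≤ κ →
      r j = -(sInv * ∑ ℓ ∈ Finset.range j, s (j - ℓ) * r ℓ)) :
    ∀ m, m ≤ κ →
      toepL r m * toepL s m * toepL r m = toepL r m ∧
      toepU r m * toepU s m * toepU r m = toepU r m := by
  have hsss : sInv * s 0 * sInv = sInv := hs.2.1
  -- right-sided recursion for the reciprocal sequence
  have hr' : ∀ j, 1 ≤ j → j ≤ κ →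
      r j = -((∑ ℓ ∈ Finset.range j, r ℓ * s (j - ℓ)) * sInv) := by
    intro j
    induction j using Nat.strong_induction_on with
    | _ j IH =>
      intro h1 hκ
      obtain ⟨n, rfl⟩ : ∃ n, j = n + 1 := ⟨j - 1, by omega⟩
      rw [hr (n+1) h1 hκ,
          Finset.sum_range_succ' (fun ℓ => s (n+1-ℓ) * r ℓ) n,
          Finset.sum_range_succ' (fun ℓ => r ℓ * s (n+1-ℓ)) n]
      simp only [Nat.add_sub_cancel, Nat.succ_sub_succ, Nat.sub_zero, hr0]
      have L1 : ∀ i ∈ Finset.range n, s (n-i) * r (i+1)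
          = -(s (n-i) * ((∑ t ∈ Finset.range (i+1), r t * s (i+1-t)) * sInv)) := by
        intro i hi
        simp only [Finset.mem_range] at hi
        rw [IH (i+1) (by omega) (by omega) (by omega), Matrix.mul_neg]
      have R1 : ∀ i ∈ Finset.range n, r (i+1) * s (n-i)
          = -((sInv * ∑ t ∈ Finset.range (i+1), s (i+1-t) * r t) * s (n-i)) := by
        intro i hi
        simp only [Finset.mem_range] at hi
        rw [hr (i+1) (by omega) (by omega), Matrix.neg_mul]
      rw [Finset.sum_congr rfl L1, Finset.sum_congr rfl R1]
      have core :
          (∑ i ∈ Finset.range n, ∑ t ∈ Finset.range (i+1),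
              sInv * (s (n-i) * (r t * (s (i+1-t) * sInv))))
          = ∑ i ∈ Finset.range n, ∑ t ∈ Finset.range (i+1),
              sInv * (s (i+1-t) * (r t * (s (n-i) * sInv))) := by
        rw [Finset.sum_sigma', Finset.sum_sigma']
        refine Finset.sum_nbij' (fun x => ⟨n - 1 - x.1 + x.2, x.2⟩)
          (fun x => ⟨n - 1 - x.1 + x.2, x.2⟩) ?_ ?_ ?_ ?_ ?_
        · rintro ⟨i, t⟩ hm
          simp only [Finset.mem_sigma, Finset.mem_range] at hm ⊢
          omega
        · rintro ⟨i, t⟩ hm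
          simp only [Finset.mem_sigma, Finset.mem_range] at hm ⊢
          omega
        · rintro ⟨i, t⟩ hm
          simp only [Finset.mem_sigma, Finset.mem_range] at hm
          have h : n - 1 - (n - 1 - i + t) + t = i := by omega
          simp [h]
        · rintro ⟨i, t⟩ hm
          simp only [Finset.mem_sigma, Finset.mem_range] at hm
          have h : n - 1 - (n - 1 - i + t) + t = i := by omega
          simp [h]
        · rintro ⟨i, t⟩ hm
          simp only [Finset.mem_sigma, Finset.mem_range] at hm
          have e1 : n - 1 - i + t + 1 - t = n - i := by omega
          have e2 : n - (n - 1 - i + t) = i + 1 - t := by omega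
          simp only [e1, e2]
      simp only [Matrix.mul_neg, Matrix.neg_mul, neg_add, neg_neg, Matrix.mul_sum,
        Matrix.sum_mul, Matrix.mul_add, Matrix.add_mul, Matrix.mul_assoc,
        Finset.sum_neg_distrib]
      rw [core]
  -- projection identities
  have hQ : ∀ n, n ≤ κ → sInv * s 0 * r n = r n := by
    intro n hn
    rcases n with _ | n
    · rw [hr0]; exact hsss
    · rw [hr (n+1) (by omega) hn, Matrix.mul_neg, ← Matrix.mul_assoc, hsss]
  have hP : ∀ n, n ≤ κ → r n * s 0 * sInv = r n := by
    intro n hn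
    rcases n with _ | n
    · rw [hr0]; exact hsss
    · rw [hr' (n+1) (by omega) hn, Matrix.neg_mul, Matrix.neg_mul]
      rw [Matrix.mul_assoc, Matrix.mul_assoc, ← Matrix.mul_assoc sInv (s 0) sInv, hsss]
  intro m hm
  constructor
  · rw [Matrix.mul_assoc, toepL_mul s r m, toepL_mul]
    apply toepL_congr
    intro d hd
    rw [Finset.sum_range_succ'
      (fun i => r (d-i) * ∑ t ∈ Finset.range (i+1), s (i-t) * r t) d]
    have h1 : ∀ i ∈ Finset.range d,
        r (d-(i+1)) * (∑ t ∈ Finset.range (i+1+1), s (i+1-t) * r t) = 0 := by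
      intro i hi
      simp only [Finset.mem_range] at hi
      rw [Finset.sum_range_succ, Nat.sub_self, hr (i+1) (by omega) (by omega)]
      have hp := hP (d-(i+1)) (by omega)
      set T := ∑ t ∈ Finset.range (i+1), s (i+1-t) * r t with hT
      have key : r (d-(i+1)) * (s 0 * (sInv * T)) = r (d-(i+1)) * T := by
        rw [← Matrix.mul_assoc, ← Matrix.mul_assoc, hp]
      rw [Matrix.mul_add, Matrix.mul_neg, Matrix.mul_neg, key, add_neg_cancel]
    rw [Finset.sum_congr rfl h1, Finset.sum_const_zero, zero_add, Nat.sub_zero,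
      Finset.sum_range_one, Nat.sub_zero, hr0, ← Matrix.mul_assoc]
    exact hP d (hd.trans hm)
  · rw [toepU_mul r s m, toepU_mul]
    apply toepU_congr
    intro d hd
    rw [Finset.sum_range_succ'
      (fun i => (∑ t ∈ Finset.range (i+1), r t * s (i-t)) * r (d-i)) d]
    have h1 : ∀ i ∈ Finset.range d,
        (∑ t ∈ Finset.range (i+1+1), r t * s (i+1-t)) * r (d-(i+1)) = 0 := by
      intro i hi
      simp only [Finset.mem_range] at hi
      rw [Finset.sum_range_succ, Nat.sub_self, hr' (i+1) (by omega) (by omega)]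
      have hq := hQ (d-(i+1)) (by omega)
      set T := ∑ t ∈ Finset.range (i+1), r t * s (i+1-t) with hT
      have key : T * sInv * s 0 * r (d-(i+1)) = T * r (d-(i+1)) := by
        rw [Matrix.mul_assoc, Matrix.mul_assoc, ← Matrix.mul_assoc sInv (s 0) (r (d-(i+1))),
          hq]
      rw [Matrix.add_mul, Matrix.neg_mul, Matrix.neg_mul, key, add_neg_cancel]
    rw [Finset.sum_congr rfl h1, Finset.sum_const_zero, zero_add, Nat.sub_zero,
      Finset.sum_range_one, Nat.sub_zero, hr0]
    exact hQ d (hd.trans hm)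
end

section
/- Let (s_j)_{j=0}^κ be complex p×q matrices with reciprocal sequence (r_j). For n ∈ ℕ₀ with 2n ≤ κ, let H_n = (s_{j+k})_{j,k=0}^n and H_n^♯ = (r_{j+k})_{j,k=0}^n be the block Hankel matrices, S_n and 𝕊_n the lower and upper triangular block Toeplitz matrices of (s_j), and S_n^♯, 𝕊_n^♯ those of (r_j). Let y = col(r₀,…,r_n) and z = row(r₀,…,r_n), and let v_p (resp. v_q) be the block column (I, 0, …, 0)ᵀ of appropriate block size. Then H_n^♯ + S_n^♯ H_n 𝕊_n^♯ = y v_p* + v_q z. -/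
open Matrix

open Finset

private lemma keyLemma {p q : ℕ} (κ : ℕ) (s : ℕ → Matrix (Fin p) (Fin q) ℂ)
    (sInv : Matrix (Fin q) (Fin p) ℂ)
    (hs : sInv * s 0 * sInv = sInv)
    (r : ℕ → Matrix (Fin q) (Fin p) ℂ) (hr0 : r 0 = sInv)
    (hr : ∀ j, 1 ≤ j → j ≤ κ →
      r j = -(sInv * ∑ ℓ ∈ Finset.range j, s (j - ℓ) * r ℓ)) :
    ∀ j k, j + k ≤ κ →
      r (j + k) + ∑ a ∈ range (j+1), ∑ b ∈ range (k+1),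
          r a * s ((j - a) + (k - b)) * r b
        = (if k = 0 then r j else 0) + (if j = 0 then r k else 0) := by
  have hL2 : ∀ m, m ≤ κ → r 0 * s 0 * r m = r m := by
    intro m hm
    rcases Nat.eq_zero_or_pos m with h0 | h1
    · subst h0; rw [hr0]; exact hs
    · rw [hr m h1 hm, hr0, Matrix.mul_neg, neg_inj, ← Matrix.mul_assoc, hs]
  have hL1 : ∀ m, 1 ≤ m → m ≤ κ →
      r 0 * ∑ ℓ ∈ range (m+1), s (m - ℓ) * r ℓ = 0 := by
    intro m h1 hm
    have h2 : r 0 * ∑ ℓ ∈ range m, s (m - ℓ) * r ℓ = -(r m) := by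
      rw [hr m h1 hm, neg_neg, hr0]
    rw [Finset.sum_range_succ, Nat.sub_self, Matrix.mul_add, h2, ← Matrix.mul_assoc,
      hL2 m hm, neg_add_cancel]
  intro j
  induction j using Nat.strong_induction_on with
  | _ j IH =>
  intro k hjk
  rcases Nat.eq_zero_or_pos j with rfl | hj
  · -- j = 0
    simp only [Nat.zero_add, Finset.sum_range_one, Nat.zero_sub, if_pos rfl]
    rcases Nat.eq_zero_or_pos k with rfl | hk
    · simp only [Finset.sum_range_one, Nat.sub_zero, Nat.zero_add, Nat.sub_self, if_pos rfl]
      rw [hL2 0 (by omega)]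
      simp
    · have h3 : ∑ b ∈ range (k+1), r 0 * s (k - b) * r b
          = r 0 * ∑ b ∈ range (k+1), s (k - b) * r b := by
        rw [Matrix.mul_sum]; exact Finset.sum_congr rfl fun b _ => Matrix.mul_assoc _ _ _
      rw [h3, hL1 k hk (by omega), if_neg (by omega), add_zero]
      simp
  · -- j ≥ 1
    obtain ⟨J, rfl⟩ : ∃ J, j = J + 1 := ⟨j - 1, by omega⟩
    set W : ℕ → Matrix (Fin p) (Fin p) ℂ :=
      fun t => ∑ b ∈ range (k+1), s (t + (k - b)) * r b with hW
    have hMm : ∀ d, (∑ a ∈ range (d+1), ∑ b ∈ range (k+1),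
        r a * s ((d - a) + (k - b)) * r b) = ∑ a ∈ range (d+1), r a * W (d - a) := by
      intro d
      refine Finset.sum_congr rfl fun a _ => ?_
      rw [hW, Matrix.mul_sum]
      exact Finset.sum_congr rfl fun b _ => Matrix.mul_assoc _ _ _
    rw [hMm (J+1)]
    -- abbreviations
    have hMd : ∀ d, d < J + 1 → (∑ c ∈ range (d+1), r c * W (d - c))
        = ((if k = 0 then r d else 0) + (if d = 0 then r k else 0)) - r (d + k) := by
      intro d hd
      have h := IH d hd k (by omega)
      rw [hMm d] at h
      rw [← h]; abel
    -- Step B/C : expand the outer sum using the recursion for r (a+1)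
    have hB : (∑ a ∈ range (J+1+1), r a * W (J+1 - a))
        = -(r 0 * ∑ a ∈ range (J+1), ∑ c ∈ range (a+1),
              s (a+1-c) * (r c * W (J+1-(a+1)))) + r 0 * W (J+1) := by
      rw [Finset.sum_range_succ', Nat.sub_zero]
      congr 1
      rw [Matrix.mul_sum, ← Finset.sum_neg_distrib]
      refine Finset.sum_congr rfl fun a ha => ?_
      simp only [Finset.mem_range] at ha
      have h1 : r (a+1) = -(r 0 * ∑ c ∈ range (a+1), s (a+1-c) * r c) := by
        rw [hr (a+1) (by omega) (by omega), hr0]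
      rw [h1, Matrix.neg_mul, Matrix.mul_assoc, Matrix.sum_mul]
      congr 2
      exact Finset.sum_congr rfl fun c _ => Matrix.mul_assoc _ _ _
    -- Step D : triangle reindexing
    have hD : (∑ a ∈ range (J+1), ∑ c ∈ range (a+1),
          s (a+1-c) * (r c * W (J+1-(a+1))))
        = ∑ d ∈ range (J+1), s (J+1-d) * (∑ c ∈ range (d+1), r c * W (d - c)) := by
      have hiff : ∀ (x y : ℕ), x ∈ range (J+1) ∧ y ∈ range (x+1)
          ↔ x ∈ Ico y (J+1) ∧ y ∈ range (J+1) := by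
        intro x y; simp only [Finset.mem_range, Finset.mem_Ico]; omega
      have hcanon1 : (∑ a ∈ range (J+1), ∑ c ∈ range (a+1),
            s (a+1-c) * (r c * W (J+1-(a+1))))
          = ∑ c ∈ range (J+1), ∑ e ∈ range (J+1-c), s ((J+1-c)-e) * (r c * W e) := by
        rw [Finset.sum_comm' hiff]
        refine Finset.sum_congr rfl fun c hc => ?_
        rw [Finset.sum_Ico_eq_sum_range]
        conv_rhs => rw [← Finset.sum_range_reflect]
        refine Finset.sum_congr rfl fun e he => ?_
        simp only [Finset.mem_range] at hc he
        have h1 : c+e+1-c = (J+1-c) - ((J+1-c)-1-e) := by omega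
        have h2 : J+1-(c+e+1) = (J+1-c)-1-e := by omega
        rw [h1, h2]
      have hcanon2 : (∑ d ∈ range (J+1), s (J+1-d) * (∑ c ∈ range (d+1), r c * W (d - c)))
          = ∑ c ∈ range (J+1), ∑ e ∈ range (J+1-c), s ((J+1-c)-e) * (r c * W e) := by
        have : ∀ d ∈ range (J+1), s (J+1-d) * (∑ c ∈ range (d+1), r c * W (d - c))
            = ∑ c ∈ range (d+1), s (J+1-d) * (r c * W (d - c)) :=
          fun d _ => Matrix.mul_sum _ _ _
        rw [Finset.sum_congr rfl this, Finset.sum_comm' hiff]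
        refine Finset.sum_congr rfl fun c hc => ?_
        rw [Finset.sum_Ico_eq_sum_range]
        refine Finset.sum_congr rfl fun e he => ?_
        simp only [Finset.mem_range] at hc he
        have h1 : J+1-(c+e) = (J+1-c)-e := by omega
        have h2 : c+e-c = e := by omega
        rw [h1, h2]
      rw [hcanon1, hcanon2]
    -- Step T : evaluate using the induction hypothesis
    have hT : (∑ d ∈ range (J+1), s (J+1-d) * (∑ c ∈ range (d+1), r c * W (d - c)))
        = ((if k = 0 then ∑ d ∈ range (J+1), s (J+1-d) * r d else 0) + s (J+1) * r k)
          - (∑ i ∈ range J, s (J-i) * r (k+1+i) + s (J+1) * r k) := by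
      have step1 : ∀ d ∈ range (J+1), s (J+1-d) * (∑ c ∈ range (d+1), r c * W (d - c))
          = ((if k = 0 then s (J+1-d) * r d else 0) + (if d = 0 then s (J+1-d) * r k else 0))
            - s (J+1-d) * r (d + k) := by
        intro d hd
        simp only [Finset.mem_range] at hd
        rw [hMd d hd, Matrix.mul_sub, Matrix.mul_add]
        congr 2 <;> split_ifs <;> simp [Matrix.mul_zero]
      rw [Finset.sum_congr rfl step1, Finset.sum_sub_distrib, Finset.sum_add_distrib,
        Finset.sum_ite_irrel, Finset.sum_const_zero, Finset.sum_ite_eq']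
      simp only [Finset.mem_range, Nat.sub_zero, if_pos (Nat.succ_pos J)]
      congr 1
      rw [Finset.sum_range_succ']
      congr 1
      · refine Finset.sum_congr rfl fun i hi => ?_
        simp only [Finset.mem_range] at hi
        have h1 : J+1-(i+1) = J-i := by omega
        have h2 : i+1+k = k+1+i := by omega
        rw [h1, h2]
      · rw [Nat.sub_zero, Nat.zero_add]
    -- Step R : expand r (J+1+k)
    have hR : r (J+1+k) = -(r 0 * (W (J+1) + ∑ i ∈ range J, s (J-i) * r (k+1+i))) := by
      rw [hr (J+1+k) (by omega) hjk, hr0]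
      congr 2
      have hsplit : (∑ ℓ ∈ range (J+1+k), s (J+1+k-ℓ) * r ℓ)
          = ∑ ℓ ∈ range ((k+1)+J), s (J+1+k-ℓ) * r ℓ :=
        congrArg (fun m => ∑ ℓ ∈ range m, s (J+1+k-ℓ) * r ℓ) (by omega)
      rw [hsplit, Finset.sum_range_add]
      congr 1
      · rw [hW]
        refine Finset.sum_congr rfl fun b hb => ?_
        simp only [Finset.mem_range] at hb
        rw [show J+1+k-b = J+1+(k-b) from by omega]
      · refine Finset.sum_congr rfl fun i hi => ?_
        simp only [Finset.mem_range] at hi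
        rw [show J+1+k-(k+1+i) = J-i from by omega]
    -- final assembly
    have hfinal : (if k = 0 then r (J+1) else 0)
        = -(r 0 * (if k = 0 then ∑ d ∈ range (J+1), s (J+1-d) * r d else 0)) := by
      split_ifs with hk
      · rw [hr (J+1) (by omega) (by omega), hr0]
      · simp
    rw [hB, hD, hT, hR, if_neg (by omega : ¬ J+1 = 0), hfinal, add_zero]
    simp only [Matrix.mul_add, Matrix.mul_sub]
    abel

private lemma finsum_cond {n j : ℕ} (hj : j < n+1) {M : Type*} [AddCommMonoid M] (g : ℕ → M) :
    (∑ c : Fin (n+1), if (c : ℕ) ≤ j then g (c : ℕ) else 0) = ∑ a ∈ range (j+1), g a := by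
  rw [Fin.sum_univ_eq_sum_range (fun i => if i ≤ j then g i else 0) (n+1),
    ← Finset.sum_subset (Finset.range_subset_range.2 (by omega : j+1 ≤ n+1))]
  · exact Finset.sum_congr rfl fun a ha => by
      simp only [Finset.mem_range] at ha; rw [if_pos (by omega)]
  · intro x hx hx2
    simp only [Finset.mem_range] at hx hx2
    rw [if_neg (by omega)]

/-- Identity for the block Hankel matrix of the reciprocal sequence:
H_n^♯ + S_n^♯ H_n 𝕊_n^♯ = y v_p* + v_q z. -/
theorem hankel_reciprocal_identity {p q : ℕ} (κ n : ℕ) (hn : 2 * n ≤ κ)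
    (s : ℕ → Matrix (Fin p) (Fin q) ℂ)
    (sInv : Matrix (Fin q) (Fin p) ℂ) (hs : IsMPInv (s 0) sInv)
    (r : ℕ → Matrix (Fin q) (Fin p) ℂ)
    (hr0 : r 0 = sInv)
    (hr : ∀ j, 1 ≤ j → j ≤ κ →
      r j = -(sInv * ∑ ℓ ∈ Finset.range j, s (j - ℓ) * r ℓ)) :
    hank r 0 n + toepL r n * hank s 0 n * toepU r n =
      (Matrix.of fun (a : Fin (n+1) × Fin q) (i : Fin p) => r (a.1 : ℕ) a.2 i) *
        (Matrix.of fun (a : Fin (n+1) × Fin p) (i : Fin p) =>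
          if (a.1 : ℕ) = 0 ∧ a.2 = i then (1 : ℂ) else 0)ᴴ +
      (Matrix.of fun (a : Fin (n+1) × Fin q) (i : Fin q) =>
          if (a.1 : ℕ) = 0 ∧ a.2 = i then (1 : ℂ) else 0) *
        (Matrix.of fun (i : Fin q) (b : Fin (n+1) × Fin p) => r (b.1 : ℕ) i b.2) := by
  have key' : ∀ j k : ℕ, j + k ≤ κ →
      r (j + k) + ∑ a ∈ Finset.range (j+1), ∑ b ∈ Finset.range (k+1),
          r (j - a) * s (a + b) * r (k - b)
        = (if k = 0 then r j else 0) + (if j = 0 then r k else 0) := by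
    intro j k h
    have hsum : (∑ a ∈ Finset.range (j+1), ∑ b ∈ Finset.range (k+1),
          r (j - a) * s (a + b) * r (k - b))
        = ∑ a ∈ Finset.range (j+1), ∑ b ∈ Finset.range (k+1),
          r a * s ((j - a) + (k - b)) * r b := by
      conv_rhs => rw [← Finset.sum_range_reflect]
      refine Finset.sum_congr rfl fun a ha => ?_
      simp only [Finset.mem_range] at ha
      conv_rhs => rw [← Finset.sum_range_reflect]
      refine Finset.sum_congr rfl fun b hb => ?_
      simp only [Finset.mem_range] at hb
      have e1 : j+1-1-a = j-a := by omega
      have e2 : k+1-1-b = k-b := by omega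
      rw [e1, e2, show j-(j-a) = a from by omega, show k-(k-b) = b from by omega]
    rw [hsum]
    exact keyLemma κ s sInv hs.2.1 r hr0 hr j k h
  ext ⟨j, x⟩ ⟨k, y⟩
  have hjk : (j:ℕ) + (k:ℕ) ≤ κ := by have h1 := j.isLt; have h2 := k.isLt; omega
  have h1 : ∀ (c1 : Fin (n+1)) (c2 : Fin q),
      (toepL r n * hank s 0 n) ((j,x)) ((c1,c2))
        = ∑ a ∈ Finset.range ((j:ℕ)+1), (r ((j:ℕ)-a) * s (a+(c1:ℕ))) x c2 := by
    intro c1 c2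
    rw [Matrix.mul_apply, Fintype.sum_prod_type]
    have hterm : ∀ a1 : Fin (n+1),
        (∑ a2 : Fin p, toepL r n (j,x) (a1,a2) * hank s 0 n (a1,a2) (c1,c2))
        = if (a1:ℕ) ≤ (j:ℕ) then (r ((j:ℕ)-(a1:ℕ)) * s ((a1:ℕ)+(c1:ℕ))) x c2 else 0 := by
      intro a1
      by_cases hle : (a1:ℕ) ≤ (j:ℕ)
      · rw [if_pos hle, Matrix.mul_apply]
        refine Finset.sum_congr rfl fun a2 _ => ?_
        simp only [toepL, hank, Matrix.of_apply, add_zero]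
        rw [if_pos hle]
      · rw [if_neg hle]
        refine Finset.sum_eq_zero fun a2 _ => ?_
        simp only [toepL, Matrix.of_apply]
        rw [if_neg hle, zero_mul]
    rw [Finset.sum_congr rfl (fun a1 _ => hterm a1)]
    exact finsum_cond j.isLt (fun a => (r ((j:ℕ) - a) * s (a + (c1:ℕ))) x c2)
  have hprod : (toepL r n * hank s 0 n * toepU r n) ((j,x)) ((k,y))
      = ∑ a ∈ Finset.range ((j:ℕ)+1), ∑ b ∈ Finset.range ((k:ℕ)+1),
          (r ((j:ℕ)-a) * s (a+b) * r ((k:ℕ)-b)) x y := by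
    rw [Matrix.mul_apply, Fintype.sum_prod_type]
    have h2 : ∀ b1 : Fin (n+1),
        (∑ b2 : Fin q, (toepL r n * hank s 0 n) (j,x) (b1,b2) * toepU r n (b1,b2) (k,y))
        = if (b1:ℕ) ≤ (k:ℕ) then
            ∑ a ∈ Finset.range ((j:ℕ)+1),
              (r ((j:ℕ)-a) * s (a+(b1:ℕ)) * r ((k:ℕ)-(b1:ℕ))) x y else 0 := by
      intro b1
      by_cases hle : (b1:ℕ) ≤ (k:ℕ)
      · rw [if_pos hle]
        have hterm : ∀ b2 : Fin q,
            (toepL r n * hank s 0 n) (j,x) (b1,b2) * toepU r n (b1,b2) (k,y)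
            = ∑ a ∈ Finset.range ((j:ℕ)+1),
                (r ((j:ℕ)-a) * s (a+(b1:ℕ))) x b2 * r ((k:ℕ)-(b1:ℕ)) b2 y := by
          intro b2
          rw [h1 b1 b2, Finset.sum_mul]
          refine Finset.sum_congr rfl fun a _ => ?_
          simp only [toepU, Matrix.of_apply]
          rw [if_pos hle]
        rw [Finset.sum_congr rfl (fun b2 _ => hterm b2), Finset.sum_comm]
        refine Finset.sum_congr rfl fun a _ => ?_
        rw [Matrix.mul_apply]
      · rw [if_neg hle]
        refine Finset.sum_eq_zero fun b2 _ => ?_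
        simp only [toepU, Matrix.of_apply]
        rw [if_neg hle, mul_zero]
    rw [Finset.sum_congr rfl (fun b1 _ => h2 b1),
      finsum_cond k.isLt (fun b => ∑ a ∈ Finset.range ((j:ℕ)+1),
        (r ((j:ℕ)-a) * s (a+b) * r ((k:ℕ)-b)) x y)]
    exact Finset.sum_comm
  have hrhs1 : ((Matrix.of fun (a : Fin (n+1) × Fin q) (i : Fin p) => r (a.1 : ℕ) a.2 i) *
        (Matrix.of fun (a : Fin (n+1) × Fin p) (i : Fin p) =>
          if (a.1 : ℕ) = 0 ∧ a.2 = i then (1 : ℂ) else 0)ᴴ) ((j,x)) ((k,y))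
      = if (k:ℕ) = 0 then r (j:ℕ) x y else 0 := by
    rw [Matrix.mul_apply]
    simp only [Matrix.conjTranspose_apply, Matrix.of_apply]
    by_cases hk : (k:ℕ) = 0
    · simp [hk, mul_ite, Finset.sum_ite_eq]
    · simp [hk]
  have hrhs2 : ((Matrix.of fun (a : Fin (n+1) × Fin q) (i : Fin q) =>
          if (a.1 : ℕ) = 0 ∧ a.2 = i then (1 : ℂ) else 0) *
        (Matrix.of fun (i : Fin q) (b : Fin (n+1) × Fin p) => r (b.1 : ℕ) i b.2)) ((j,x)) ((k,y))
      = if (j:ℕ) = 0 then r (k:ℕ) x y else 0 := by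
    rw [Matrix.mul_apply]
    simp only [Matrix.of_apply]
    by_cases hj : (j:ℕ) = 0
    · simp [hj, ite_mul, Finset.sum_ite_eq]
    · simp [hj]
  have hE := congrFun (congrFun (key' (j:ℕ) (k:ℕ) hjk) x) y
  simp only [Matrix.add_apply, Matrix.sum_apply,
    apply_ite (fun (M : Matrix (Fin q) (Fin p) ℂ) => M x y), Matrix.zero_apply] at hE
  simp only [Matrix.add_apply, hprod, hrhs1, hrhs2]
  rw [show hank r 0 n ((j,x)) ((k,y)) = r ((j:ℕ)+(k:ℕ)) x y from by simp [hank]]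
  exact hE
end

section
/- Let (s_j)_{j=0}^κ be complex p×q matrices with reciprocal sequence (r_j). For all n ∈ ℕ₀ with 2n+1 ≤ κ, define K_n = (s_{j+k+1})_{j,k=0}^n and K_n^♯ = (r_{j+k+1})_{j,k=0}^n, and let S_n^♯, 𝕊_n^♯ be the lower and upper triangular block Toeplitz matrices of (r_j). Then K_n^♯ = −S_n^♯ K_n 𝕊_n^♯. -/
open Matrix Finset

section Aux

variable {p q : ℕ} (κ : ℕ) (s : ℕ → Matrix (Fin p) (Fin q) ℂ)
  (sInv : Matrix (Fin q) (Fin p) ℂ)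
  (r : ℕ → Matrix (Fin q) (Fin p) ℂ)
  (hs : IsMPInv (s 0) sInv)
  (hr0 : r 0 = sInv)
  (hr : ∀ j, 1 ≤ j → j ≤ κ →
      r j = -(sInv * ∑ ℓ ∈ Finset.range j, s (j - ℓ) * r ℓ))

include hs hr0 hr

/-- `r j = sInv * s 0 * r j`. -/
lemma recip_Er : ∀ j, j ≤ κ → sInv * (s 0 * r j) = r j := by
  have hss : sInv * s 0 * sInv = sInv := hs.2.1
  intro j hj
  rcases Nat.eq_zero_or_pos j with h0 | h1
  · subst h0; rw [hr0, ← Matrix.mul_assoc, hss]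
  · rw [hr j h1 hj, Matrix.mul_neg, Matrix.mul_neg, ← Matrix.mul_assoc,
      ← Matrix.mul_assoc, hss]

/-- right-sided recursion for the reciprocal sequence. -/
lemma recip_right : ∀ j, 1 ≤ j → j ≤ κ →
    r j = -((∑ ℓ ∈ Finset.range j, r ℓ * s (j - ℓ)) * sInv) := by
  have hss : sInv * s 0 * sInv = sInv := hs.2.1
  intro j
  induction j using Nat.strong_induction_on with
  | _ j ih =>
    intro h1 h2
    rw [hr j h1 h2, neg_inj, Matrix.mul_sum, Matrix.sum_mul]
    have hsplit : ∀ (f : ℕ → Matrix (Fin q) (Fin p) ℂ),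
        ∑ ℓ ∈ Finset.range j, f ℓ = f 0 + ∑ ℓ ∈ Finset.Ico 1 j, f ℓ := by
      intro f
      rw [Finset.range_eq_Ico, Finset.sum_eq_sum_Ico_succ_bot h1]
    rw [hsplit, hsplit]
    have h0 : sInv * (s (j - 0) * r 0) = r 0 * s (j - 0) * sInv := by
      rw [hr0, Matrix.mul_assoc]
    rw [h0]
    congr 1
    -- now the Ico 1 j part
    have hL : ∀ ℓ ∈ Finset.Ico 1 j, sInv * (s (j - ℓ) * r ℓ) =
        -∑ m ∈ Finset.range ℓ, sInv * (s (j - ℓ) * (r m * (s (ℓ - m) * sInv))) := by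
      intro ℓ hℓ
      rw [Finset.mem_Ico] at hℓ
      rw [ih ℓ hℓ.2 hℓ.1 (le_trans (le_of_lt hℓ.2) h2)]
      simp only [Matrix.mul_neg, Matrix.neg_mul, Matrix.sum_mul, Matrix.mul_sum,
        Matrix.mul_assoc]
    have hR : ∀ ℓ ∈ Finset.Ico 1 j, r ℓ * s (j - ℓ) * sInv =
        -∑ m ∈ Finset.range ℓ, sInv * (s (ℓ - m) * (r m * (s (j - ℓ) * sInv))) := by
      intro ℓ hℓ
      rw [Finset.mem_Ico] at hℓ
      rw [hr ℓ hℓ.1 (le_trans (le_of_lt hℓ.2) h2)]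
      simp only [Matrix.mul_neg, Matrix.neg_mul, Matrix.sum_mul, Matrix.mul_sum,
        Matrix.mul_assoc]
    rw [Finset.sum_congr rfl hL, Finset.sum_congr rfl hR, Finset.sum_neg_distrib,
      Finset.sum_neg_distrib, neg_inj, Finset.sum_sigma', Finset.sum_sigma']
    refine Finset.sum_nbij' (fun a => ⟨j - a.1 + a.2, a.2⟩) (fun a => ⟨j - a.1 + a.2, a.2⟩)
      ?_ ?_ ?_ ?_ ?_
    · rintro ⟨ℓ, m⟩ hm
      simp only [Finset.mem_sigma, Finset.mem_Ico, Finset.mem_range] at hm ⊢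
      omega
    · rintro ⟨ℓ, m⟩ hm
      simp only [Finset.mem_sigma, Finset.mem_Ico, Finset.mem_range] at hm ⊢
      omega
    · rintro ⟨ℓ, m⟩ hm
      simp only [Finset.mem_sigma, Finset.mem_Ico, Finset.mem_range] at hm
      simp only [Sigma.mk.inj_iff, heq_eq_eq, and_true]
      omega
    · rintro ⟨ℓ, m⟩ hm
      simp only [Finset.mem_sigma, Finset.mem_Ico, Finset.mem_range] at hm
      simp only [Sigma.mk.inj_iff, heq_eq_eq, and_true]
      omega
    · rintro ⟨ℓ, m⟩ hm
      simp only [Finset.mem_sigma, Finset.mem_Ico, Finset.mem_range] at hm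
      have e1 : j - (j - ℓ + m) = ℓ - m := by omega
      have e2 : (j - ℓ + m) - m = j - ℓ := by omega
      simp only [e1, e2]

end Aux

section Aux2

variable {p q : ℕ} (κ : ℕ) (s : ℕ → Matrix (Fin p) (Fin q) ℂ)
  (sInv : Matrix (Fin q) (Fin p) ℂ)
  (r : ℕ → Matrix (Fin q) (Fin p) ℂ)
  (hs : IsMPInv (s 0) sInv)
  (hr0 : r 0 = sInv)
  (hr : ∀ j, 1 ≤ j → j ≤ κ →
      r j = -(sInv * ∑ ℓ ∈ Finset.range j, s (j - ℓ) * r ℓ))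

include hs hr0 hr

/-- `r j = r j * s 0 * sInv`. -/
lemma recip_rF : ∀ j, j ≤ κ → r j * (s 0 * sInv) = r j := by
  have hss : sInv * (s 0 * sInv) = sInv := by
    rw [← Matrix.mul_assoc]; exact hs.2.1
  intro j hj
  rcases Nat.eq_zero_or_pos j with h0 | h1
  · subst h0; rw [hr0, hss]
  · rw [recip_right κ s sInv r hs hr0 hr j h1 hj, Matrix.neg_mul, Matrix.mul_assoc, hss]

/-- full left convolution vanishes. -/
lemma recip_convL : ∀ m, 1 ≤ m → m ≤ κ →
    sInv * ∑ ℓ ∈ Finset.range (m+1), s (m - ℓ) * r ℓ = 0 := by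
  intro m h1 h2
  rw [Finset.sum_range_succ, Matrix.mul_add, Nat.sub_self,
    ← Matrix.mul_assoc, Matrix.mul_assoc sInv (s 0) (r m),
    recip_Er κ s sInv r hs hr0 hr m h2]
  have := hr m h1 h2
  rw [show sInv * ∑ ℓ ∈ Finset.range m, s (m - ℓ) * r ℓ = -r m by rw [this]; simp]
  simp

/-- full right convolution vanishes. -/
lemma recip_convR : ∀ m, 1 ≤ m → m ≤ κ →
    (∑ ℓ ∈ Finset.range (m+1), r ℓ * s (m - ℓ)) * sInv = 0 := by
  intro m h1 h2
  rw [Finset.sum_range_succ, Matrix.add_mul, Nat.sub_self, Matrix.mul_assoc,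
    recip_rF κ s sInv r hs hr0 hr m h2]
  have := recip_right κ s sInv r hs hr0 hr m h1 h2
  rw [show (∑ ℓ ∈ Finset.range m, r ℓ * s (m - ℓ)) * sInv = -r m by rw [this]; simp]
  simp

/-- the key sum identity. -/
lemma recip_main : ∀ j k, j + k + 1 ≤ κ →
    ∑ u ∈ Finset.range (j+1), ∑ v ∈ Finset.range (k+1),
      r u * s (j + k + 1 - u - v) * r v = -r (j + k + 1) := by
  intro j
  induction j with
  | zero =>
    intro k hk
    simp only [Nat.zero_add] at hk ⊢
    rw [Finset.sum_range_one]
    rw [hr (k + 1) (by omega) hk, hr0, Matrix.mul_sum, neg_neg]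
    refine Finset.sum_congr rfl (fun v hv => ?_)
    rw [show k + 1 - 0 - v = k + 1 - v by omega, Matrix.mul_assoc]
  | succ j ih =>
    intro k hk
    have hk1 : j + (k + 1) + 1 ≤ κ := by omega
    have hih := ih (k + 1) hk1
    rw [Finset.sum_range_succ] -- outer split, u = j+1
    -- split inner sums of hih at v = k+1
    have hsplit : ∑ u ∈ Finset.range (j+1), ∑ v ∈ Finset.range (k+1),
        r u * s (j + 1 + k + 1 - u - v) * r v
        = -r (j + 1 + k + 1)
          - ∑ u ∈ Finset.range (j+1), r u * s (j + 1 - u) * r (k+1) := by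
      have hc : ∀ u ∈ Finset.range (j+1),
          ∑ v ∈ Finset.range (k+1+1), r u * s (j + (k+1) + 1 - u - v) * r v
          = (∑ v ∈ Finset.range (k+1), r u * s (j + 1 + k + 1 - u - v) * r v)
            + r u * s (j + 1 - u) * r (k+1) := by
        intro u hu
        rw [Finset.mem_range] at hu
        rw [Finset.sum_range_succ]
        congr 1
        · refine Finset.sum_congr rfl (fun v hv => ?_)
          rw [Finset.mem_range] at hv
          rw [show j + (k+1) + 1 - u - v = j + 1 + k + 1 - u - v by omega]
        · rw [show j + (k+1) + 1 - u - (k+1) = j + 1 - u by omega]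
      rw [Finset.sum_congr rfl hc, Finset.sum_add_distrib] at hih
      rw [show j + (k+1) + 1 = j + 1 + k + 1 by omega] at hih
      rw [eq_sub_iff_add_eq, hih]
    rw [hsplit]
    -- boundary terms
    have hB : ∑ v ∈ Finset.range (k+1), r (j+1) * s (j + 1 + k + 1 - (j+1) - v) * r v
        = -(r (j+1) * s 0 * r (k+1)) := by
      have h3 := recip_convL κ s sInv r hs hr0 hr (k+1) (by omega) (by omega)
      have h4 := recip_rF κ s sInv r hs hr0 hr (j+1) (by omega)
      have hfull : r (j+1) * ∑ v ∈ Finset.range (k+1+1), s (k + 1 - v) * r v = 0 := by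
        calc r (j+1) * ∑ v ∈ Finset.range (k+1+1), s (k + 1 - v) * r v
            = (r (j+1) * (s 0 * sInv)) * ∑ v ∈ Finset.range (k+1+1), s (k + 1 - v) * r v := by
              rw [h4]
          _ = r (j+1) * (s 0 * (sInv * ∑ v ∈ Finset.range (k+1+1), s (k + 1 - v) * r v)) := by
              rw [Matrix.mul_assoc, Matrix.mul_assoc]
          _ = 0 := by rw [h3, Matrix.mul_zero, Matrix.mul_zero]
      rw [Finset.sum_range_succ, Nat.sub_self, Matrix.mul_add, Matrix.mul_sum] at hfull
      have e1 : ∑ v ∈ Finset.range (k+1), r (j+1) * s (j + 1 + k + 1 - (j+1) - v) * r v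
          = ∑ v ∈ Finset.range (k+1), r (j+1) * (s (k + 1 - v) * r v) := by
        refine Finset.sum_congr rfl (fun v hv => ?_)
        rw [Finset.mem_range] at hv
        rw [show j + 1 + k + 1 - (j+1) - v = k + 1 - v by omega, Matrix.mul_assoc]
      rw [e1, show r (j+1) * s 0 * r (k+1) = r (j+1) * (s 0 * r (k+1)) from Matrix.mul_assoc _ _ _]
      exact eq_neg_of_add_eq_zero_left hfull
    have hA : ∑ u ∈ Finset.range (j+1), r u * s (j + 1 - u) * r (k+1)
        = -(r (j+1) * s 0 * r (k+1)) := by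
      have h3 := recip_convR κ s sInv r hs hr0 hr (j+1) (by omega) (by omega)
      have h4 := recip_Er κ s sInv r hs hr0 hr (k+1) (by omega)
      have hfull : (∑ u ∈ Finset.range (j+1+1), r u * s (j + 1 - u)) * r (k+1) = 0 := by
        calc (∑ u ∈ Finset.range (j+1+1), r u * s (j + 1 - u)) * r (k+1)
            = (∑ u ∈ Finset.range (j+1+1), r u * s (j + 1 - u)) * (sInv * (s 0 * r (k+1))) := by
              rw [h4]
          _ = ((∑ u ∈ Finset.range (j+1+1), r u * s (j + 1 - u)) * sInv) * (s 0 * r (k+1)) := by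
              rw [Matrix.mul_assoc]
          _ = 0 := by rw [h3, Matrix.zero_mul]
      rw [Finset.sum_range_succ, Nat.sub_self, Matrix.add_mul, Matrix.sum_mul,
        Matrix.mul_assoc (r (j+1)) (s 0) (r (k+1))] at hfull
      rw [show r (j+1) * s 0 * r (k+1) = r (j+1) * (s 0 * r (k+1)) from Matrix.mul_assoc _ _ _]
      exact eq_neg_of_add_eq_zero_left hfull
    rw [hB, hA]
    abel

end Aux2

lemma recip_reindex {p q : ℕ} (s : ℕ → Matrix (Fin p) (Fin q) ℂ)
    (r : ℕ → Matrix (Fin q) (Fin p) ℂ) (j k : ℕ) :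
    ∑ a ∈ Finset.range (j+1), ∑ b ∈ Finset.range (k+1),
      r (j-a) * s (a+b+1) * r (k-b)
    = ∑ u ∈ Finset.range (j+1), ∑ v ∈ Finset.range (k+1),
      r u * s (j+k+1-u-v) * r v := by
  rw [Finset.sum_sigma', Finset.sum_sigma']
  refine Finset.sum_nbij' (fun x => ⟨j - x.1, k - x.2⟩) (fun x => ⟨j - x.1, k - x.2⟩)
    ?_ ?_ ?_ ?_ ?_
  · rintro ⟨a, b⟩ h
    simp only [Finset.mem_sigma, Finset.mem_range] at h ⊢
    omega
  · rintro ⟨a, b⟩ h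
    simp only [Finset.mem_sigma, Finset.mem_range] at h ⊢
    omega
  · rintro ⟨a, b⟩ h
    simp only [Finset.mem_sigma, Finset.mem_range] at h
    simp only [Sigma.mk.inj_iff, heq_eq_eq]
    constructor <;> omega
  · rintro ⟨a, b⟩ h
    simp only [Finset.mem_sigma, Finset.mem_range] at h
    simp only [Sigma.mk.inj_iff, heq_eq_eq]
    constructor <;> omega
  · rintro ⟨a, b⟩ h
    simp only [Finset.mem_sigma, Finset.mem_range] at h
    rw [show j + k + 1 - (j - a) - (k - b) = a + b + 1 by omega]

lemma sum_ite_le {M : Type*} [AddCommMonoid M] (n j : ℕ) (hj : j ≤ n) (F : ℕ → M) :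
    ∑ a ∈ Finset.range (n+1), (if a ≤ j then F a else 0) = ∑ a ∈ Finset.range (j+1), F a := by
  rw [← Finset.sum_filter]
  congr 1
  ext a
  simp only [Finset.mem_filter, Finset.mem_range]
  omega
/-- K_n^♯ = −S_n^♯ K_n 𝕊_n^♯ for the reciprocal sequence. -/
theorem hankelK_reciprocal {p q : ℕ} (κ n : ℕ) (hn : 2 * n + 1 ≤ κ)
    (s : ℕ → Matrix (Fin p) (Fin q) ℂ)
    (sInv : Matrix (Fin q) (Fin p) ℂ) (hs : IsMPInv (s 0) sInv)
    (r : ℕ → Matrix (Fin q) (Fin p) ℂ)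
    (hr0 : r 0 = sInv)
    (hr : ∀ j, 1 ≤ j → j ≤ κ →
      r j = -(sInv * ∑ ℓ ∈ Finset.range j, s (j - ℓ) * r ℓ)) :
    hank r 1 n = -(toepL r n * hank s 1 n * toepU r n) := by
  ext ⟨j, x⟩ ⟨k, y⟩
  have hj : (j : ℕ) ≤ n := Nat.lt_succ_iff.mp j.2
  have hk : (k : ℕ) ≤ n := Nat.lt_succ_iff.mp k.2
  have key : ∀ (b : Fin (n+1)) (w : Fin q),
      (∑ d : Fin (n+1) × Fin p, toepL r n (j, x) d * hank s 1 n d (b, w))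
      = ∑ a ∈ Finset.range ((j:ℕ)+1), (r ((j:ℕ) - a) * s (a + (b:ℕ) + 1)) x w := by
    intro b w
    rw [Fintype.sum_prod_type]
    have h1 : ∀ a : Fin (n+1),
        ∑ z : Fin p, toepL r n (j, x) (a, z) * hank s 1 n (a, z) (b, w)
        = if (a:ℕ) ≤ (j:ℕ) then (r ((j:ℕ) - (a:ℕ)) * s ((a:ℕ) + (b:ℕ) + 1)) x w else 0 := by
      intro a
      simp only [toepL, hank, Matrix.of_apply]
      split_ifs with h
      · rw [Matrix.mul_apply]
      · simp
    rw [Finset.sum_congr rfl (fun a _ => h1 a),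
      Fin.sum_univ_eq_sum_range
        (fun a => if a ≤ (j:ℕ) then (r ((j:ℕ) - a) * s (a + (b:ℕ) + 1)) x w else 0) (n+1)]
    exact sum_ite_le n (j:ℕ) hj _
  have hmul : (toepL r n * hank s 1 n * toepU r n) (j, x) (k, y)
      = ∑ b ∈ Finset.range ((k:ℕ)+1), ∑ a ∈ Finset.range ((j:ℕ)+1),
          (r ((j:ℕ) - a) * s (a + b + 1) * r ((k:ℕ) - b)) x y := by
    rw [Matrix.mul_apply, Fintype.sum_prod_type]
    have step : ∀ b : Fin (n+1),
        ∑ w : Fin q, (toepL r n * hank s 1 n) (j, x) (b, w) * toepU r n (b, w) (k, y)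
        = if (b:ℕ) ≤ (k:ℕ) then
            ∑ a ∈ Finset.range ((j:ℕ)+1),
              (r ((j:ℕ) - a) * s (a + (b:ℕ) + 1) * r ((k:ℕ) - (b:ℕ))) x y
          else 0 := by
      intro b
      have hLH : ∀ w : Fin q, (toepL r n * hank s 1 n) (j, x) (b, w)
          = ∑ a ∈ Finset.range ((j:ℕ)+1), (r ((j:ℕ) - a) * s (a + (b:ℕ) + 1)) x w := by
        intro w
        rw [Matrix.mul_apply]
        exact key b w
      simp only [hLH, toepU, Matrix.of_apply]
      split_ifs with h
      · calc ∑ w : Fin q, (∑ a ∈ Finset.range ((j:ℕ)+1),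
                (r ((j:ℕ) - a) * s (a + (b:ℕ) + 1)) x w) * r ((k:ℕ) - (b:ℕ)) w y
            = ∑ w : Fin q, ∑ a ∈ Finset.range ((j:ℕ)+1),
                (r ((j:ℕ) - a) * s (a + (b:ℕ) + 1)) x w * r ((k:ℕ) - (b:ℕ)) w y := by
              refine Finset.sum_congr rfl fun w _ => ?_
              rw [Finset.sum_mul]
          _ = ∑ a ∈ Finset.range ((j:ℕ)+1), ∑ w : Fin q,
                (r ((j:ℕ) - a) * s (a + (b:ℕ) + 1)) x w * r ((k:ℕ) - (b:ℕ)) w y :=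
              Finset.sum_comm
          _ = ∑ a ∈ Finset.range ((j:ℕ)+1),
                (r ((j:ℕ) - a) * s (a + (b:ℕ) + 1) * r ((k:ℕ) - (b:ℕ))) x y := by
              refine Finset.sum_congr rfl fun a _ => ?_
              rw [Matrix.mul_apply]
      · simp
    rw [Finset.sum_congr rfl (fun b _ => step b),
      Fin.sum_univ_eq_sum_range
        (fun b => if b ≤ (k:ℕ) then
            ∑ a ∈ Finset.range ((j:ℕ)+1),
              (r ((j:ℕ) - a) * s (a + b + 1) * r ((k:ℕ) - b)) x y
          else 0) (n+1)]
    exact sum_ite_le n (k:ℕ) hk _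
  have hcomb : ∑ a ∈ Finset.range ((j:ℕ)+1), ∑ b ∈ Finset.range ((k:ℕ)+1),
      r ((j:ℕ) - a) * s (a + b + 1) * r ((k:ℕ) - b) = -r ((j:ℕ) + (k:ℕ) + 1) :=
    (recip_reindex s r (j:ℕ) (k:ℕ)).trans
      (recip_main κ s sInv r hs hr0 hr (j:ℕ) (k:ℕ) (by omega))
  have hswap : ∑ b ∈ Finset.range ((k:ℕ)+1), ∑ a ∈ Finset.range ((j:ℕ)+1),
        (r ((j:ℕ) - a) * s (a + b + 1) * r ((k:ℕ) - b)) x y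
      = (∑ a ∈ Finset.range ((j:ℕ)+1), ∑ b ∈ Finset.range ((k:ℕ)+1),
          r ((j:ℕ) - a) * s (a + b + 1) * r ((k:ℕ) - b)) x y := by
    simp only [Matrix.sum_apply]
    exact Finset.sum_comm
  rw [Matrix.neg_apply, hmul, hswap, hcomb]
  simp [hank]
end

section
/- Let M = [[A, B],[C, D]] be a block partitioned (p+q)×(r+s) complex matrix, let X be m×p with X*X = I_p, Y be n×p, Z be n×q, U be r×u with UU* = I_r, V be r×v, and W be s×v. Set N = [[X, 0],[Y, Z]] · M · [[U, V],[0, W]]. Then N has block form [[XAU, X(AV+BW)],[(YA+ZC)U, YAV+YBW+ZCV+ZDW]] and the Schur complement satisfies N/(XAU) = Y(I_p − AA⁺)BW + ZC(I_r − A⁺A)V + Z(M/A)W, where M/A = D − CA⁺B. -/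
open Matrix

lemma mp_unique {m n : Type*} [Fintype m] [Fintype n] [DecidableEq m] [DecidableEq n]
    {A : Matrix m n ℂ} {P Q : Matrix n m ℂ}
    (hP : IsMPInv A P) (hQ : IsMPInv A Q) : P = Q := by
  obtain ⟨hP1, hP2, hP3, hP4⟩ := hP
  obtain ⟨hQ1, hQ2, hQ3, hQ4⟩ := hQ
  have hAP : A * P = A * Q := by
    calc A * P = (A * P)ᴴ := hP3.symm
    _ = ((A * Q * A) * P)ᴴ := by rw [hQ1]
    _ = (A * Q * (A * P))ᴴ := by rw [Matrix.mul_assoc]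
    _ = (A * P)ᴴ * (A * Q)ᴴ := by rw [conjTranspose_mul]
    _ = A * P * (A * Q) := by rw [hP3, hQ3]
    _ = (A * P * A) * Q := by simp only [Matrix.mul_assoc]
    _ = A * Q := by rw [hP1]
  have hPA : P * A = Q * A := by
    calc P * A = (P * A)ᴴ := hP4.symm
    _ = (P * (A * Q * A))ᴴ := by rw [hQ1]
    _ = ((P * A) * (Q * A))ᴴ := by simp only [Matrix.mul_assoc]
    _ = (Q * A)ᴴ * (P * A)ᴴ := by rw [conjTranspose_mul]
    _ = Q * A * (P * A) := by rw [hP4, hQ4]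
    _ = Q * (A * P * A) := by simp only [Matrix.mul_assoc]
    _ = Q * A := by rw [hP1]
  calc P = P * A * P := hP2.symm
  _ = Q * A * P := by rw [hPA]
  _ = Q * (A * Q) := by rw [Matrix.mul_assoc, hAP]
  _ = Q := by rw [← Matrix.mul_assoc, hQ2]

/-- Block representation and Schur complement of a transformed block matrix. -/
theorem schur_complement_transformed {p q r s m n u v : ℕ}
    (A : Matrix (Fin p) (Fin r) ℂ) (B : Matrix (Fin p) (Fin s) ℂ)
    (C : Matrix (Fin q) (Fin r) ℂ) (D : Matrix (Fin q) (Fin s) ℂ)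
    (X : Matrix (Fin m) (Fin p) ℂ) (hX : Xᴴ * X = 1)
    (Y : Matrix (Fin n) (Fin p) ℂ) (Z : Matrix (Fin n) (Fin q) ℂ)
    (U : Matrix (Fin r) (Fin u) ℂ) (hU : U * Uᴴ = 1)
    (V : Matrix (Fin r) (Fin v) ℂ) (W : Matrix (Fin s) (Fin v) ℂ)
    (Ainv : Matrix (Fin r) (Fin p) ℂ) (hA : IsMPInv A Ainv)
    (XAUinv : Matrix (Fin u) (Fin m) ℂ) (hXAU : IsMPInv (X * A * U) XAUinv) :
    Matrix.fromBlocks X 0 Y Z * Matrix.fromBlocks A B C D * Matrix.fromBlocks U V 0 W =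
      Matrix.fromBlocks (X * A * U) (X * (A * V + B * W))
        ((Y * A + Z * C) * U) (Y * A * V + Y * B * W + Z * C * V + Z * D * W) ∧
    (Y * A * V + Y * B * W + Z * C * V + Z * D * W)
        - (Y * A + Z * C) * U * XAUinv * (X * (A * V + B * W)) =
      Y * (1 - A * Ainv) * B * W + Z * C * (1 - Ainv * A) * V + Z * (D - C * Ainv * B) * W := by
  obtain ⟨hA1, hA2, hA3, hA4⟩ := hA
  have hU' : ∀ {k : ℕ} (M : Matrix (Fin r) (Fin k) ℂ), U * (Uᴴ * M) = M := fun M => by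
    rw [← Matrix.mul_assoc, hU, Matrix.one_mul]
  have hX' : ∀ {k : ℕ} (M : Matrix (Fin p) (Fin k) ℂ), Xᴴ * (X * M) = M := fun M => by
    rw [← Matrix.mul_assoc, hX, Matrix.one_mul]
  constructor
  · simp only [Matrix.fromBlocks_multiply, Matrix.mul_add, Matrix.add_mul,
      Matrix.zero_mul, Matrix.mul_zero, add_zero, zero_add, Matrix.mul_assoc]
    have : Y * (A * V) + Z * (C * V) + (Y * (B * W) + Z * (D * W))
        = Y * (A * V) + Y * (B * W) + Z * (C * V) + Z * (D * W) := by abel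
    rw [this]
  · have key : IsMPInv (X * A * U) (Uᴴ * Ainv * Xᴴ) := by
      refine ⟨?_, ?_, ?_, ?_⟩
      · calc X * A * U * (Uᴴ * Ainv * Xᴴ) * (X * A * U)
            = X * (A * (U * (Uᴴ * (Ainv * (Xᴴ * (X * (A * U))))))) := by
              simp only [Matrix.mul_assoc]
        _ = X * (A * (Ainv * (A * U))) := by rw [hU', hX']
        _ = X * (A * Ainv * A) * U := by simp only [Matrix.mul_assoc]
        _ = X * A * U := by rw [hA1, Matrix.mul_assoc]
      · calc Uᴴ * Ainv * Xᴴ * (X * A * U) * (Uᴴ * Ainv * Xᴴ)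
            = Uᴴ * (Ainv * (Xᴴ * (X * (A * (U * (Uᴴ * (Ainv * Xᴴ))))))) := by
              simp only [Matrix.mul_assoc]
        _ = Uᴴ * (Ainv * (A * (Ainv * Xᴴ))) := by rw [hU', hX']
        _ = Uᴴ * (Ainv * A * Ainv) * Xᴴ := by simp only [Matrix.mul_assoc]
        _ = Uᴴ * Ainv * Xᴴ := by rw [hA2, Matrix.mul_assoc]
      · have e : X * A * U * (Uᴴ * Ainv * Xᴴ) = X * (A * Ainv) * Xᴴ := by
          calc X * A * U * (Uᴴ * Ainv * Xᴴ)
              = X * (A * (U * (Uᴴ * (Ainv * Xᴴ)))) := by simp only [Matrix.mul_assoc]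
          _ = X * (A * (Ainv * Xᴴ)) := by rw [hU']
          _ = X * (A * Ainv) * Xᴴ := by simp only [Matrix.mul_assoc]
        rw [e]
        calc (X * (A * Ainv) * Xᴴ)ᴴ = Xᴴᴴ * ((A * Ainv)ᴴ * Xᴴ) := by
              rw [conjTranspose_mul, conjTranspose_mul]
        _ = X * (A * Ainv) * Xᴴ := by
              rw [hA3, conjTranspose_conjTranspose]
              simp only [Matrix.mul_assoc]
      · have e : Uᴴ * Ainv * Xᴴ * (X * A * U) = Uᴴ * (Ainv * A) * U := by
          calc Uᴴ * Ainv * Xᴴ * (X * A * U)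
              = Uᴴ * (Ainv * (Xᴴ * (X * (A * U)))) := by simp only [Matrix.mul_assoc]
          _ = Uᴴ * (Ainv * (A * U)) := by rw [hX']
          _ = Uᴴ * (Ainv * A) * U := by simp only [Matrix.mul_assoc]
        rw [e]
        calc (Uᴴ * (Ainv * A) * U)ᴴ = Uᴴ * ((Ainv * A)ᴴ * Uᴴᴴ) := by
              rw [conjTranspose_mul, conjTranspose_mul, conjTranspose_conjTranspose]
        _ = Uᴴ * (Ainv * A) * U := by
              rw [hA4, conjTranspose_conjTranspose]
              simp only [Matrix.mul_assoc]
    have hinv : XAUinv = Uᴴ * Ainv * Xᴴ := mp_unique hXAU key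
    rw [hinv]
    have e : (Y * A + Z * C) * U * (Uᴴ * Ainv * Xᴴ) * (X * (A * V + B * W))
        = (Y * A + Z * C) * (Ainv * (A * V + B * W)) := by
      calc (Y * A + Z * C) * U * (Uᴴ * Ainv * Xᴴ) * (X * (A * V + B * W))
          = (Y * A + Z * C) * (U * (Uᴴ * (Ainv * (Xᴴ * (X * (A * V + B * W)))))) := by
            simp only [Matrix.mul_assoc]
      _ = (Y * A + Z * C) * (Ainv * (A * V + B * W)) := by rw [hU', hX']
    rw [e]
    have hYA : Y * (A * (Ainv * (A * V))) = Y * (A * V) := by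
      calc Y * (A * (Ainv * (A * V))) = Y * (A * Ainv * A) * V := by
            simp only [Matrix.mul_assoc]
      _ = Y * (A * V) := by rw [hA1, Matrix.mul_assoc]
    simp only [Matrix.mul_add, Matrix.add_mul, Matrix.mul_sub, Matrix.sub_mul,
      Matrix.mul_one, Matrix.one_mul, Matrix.mul_assoc, hYA]
    abel
end

section
/- Let n ∈ ℕ, let s₀,…,s_{2n} be complex p×q matrices such that the truncated sequence s₀,…,s_{2n−1} is dominated by its first term (i.e., the column space of every s_j (j ≤ 2n−1) is contained in that of s₀ and the null space of s₀ is contained in that of every such s_j). Then the block Hankel matrix H_n = (s_{j+k})_{j,k=0}^n admits the factorization H_n = [[I_p, 0],[y₁ s₀⁺, I_{np}]] · diag(s₀, L_n) · [[I_q, s₀⁺ z₁],[0, I_{nq}]], where y₁ = col(s₁,…,s_n), z₁ = row(s₁,…,s_n), and L_n = G_{n−1} − y₁ s₀⁺ z₁ with G_{n−1} = (s_{j+k+2})_{j,k=0}^{n−1}. -/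
open Matrix

/-!
If `X` is any inner inverse of `s₀` (`s₀ X s₀ = s₀`), then `s₀ X` is a projection onto the range
of `s₀` and `X s₀` fixes everything modulo the kernel of `s₀`. Domination by `s₀` therefore gives
`s₀ X s_j = s_j = s_j X s₀`, i.e. `s₀ X z₁ = z₁` and `y₁ X s₀ = y₁`, and these two identities are
exactly what makes the block LDU factorization of `[[s₀, z₁], [y₁, G]]` multiply out.
-/

namespace Matrix

variable {R : Type*} {l m n o : Type*}

theorem mul_mul_eq_of_range_le [CommRing R] [Fintype l] [Fintype m] [Fintype n]
    {A : Matrix l m R} {X : Matrix m l R} {B : Matrix l n R} (hA : A * X * A = A)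
    (h : LinearMap.range B.mulVecLin ≤ LinearMap.range A.mulVecLin) :
    A * X * B = B := by
  refine ext_iff_mulVec.mpr fun v => ?_
  obtain ⟨u, hu⟩ := h ⟨v, rfl⟩
  change A *ᵥ u = B *ᵥ v at hu
  rw [← mulVec_mulVec, ← hu, mulVec_mulVec, hA]

theorem mul_mul_eq_of_ker_le [CommRing R] [Fintype l] [Fintype m]
    {A : Matrix l m R} {X : Matrix m l R} {B : Matrix n m R} (hA : A * X * A = A)
    (h : LinearMap.ker A.mulVecLin ≤ LinearMap.ker B.mulVecLin) :
    B * X * A = B := by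
  refine ext_iff_mulVec.mpr fun v => ?_
  have hker : v - (X * A) *ᵥ v ∈ LinearMap.ker A.mulVecLin := by
    change A *ᵥ (v - (X * A) *ᵥ v) = 0
    rw [mulVec_sub, mulVec_mulVec, ← Matrix.mul_assoc, hA, sub_self]
  have hB : B *ᵥ (v - (X * A) *ᵥ v) = 0 := h hker
  rw [mulVec_sub, sub_eq_zero, mulVec_mulVec, ← Matrix.mul_assoc] at hB
  exact hB.symm

theorem fromBlocks_eq_mul_fromBlocks_diagonal_mul [Ring R] [Fintype l] [Fintype m] [Fintype n]
    [Fintype o] [DecidableEq l] [DecidableEq m] [DecidableEq n] [DecidableEq o]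
    (A : Matrix l m R) (X : Matrix m l R) (Z : Matrix l o R) (Y : Matrix n m R)
    (G : Matrix n o R) (hZ : A * X * Z = Z) (hY : Y * X * A = Y) :
    fromBlocks A Z Y G =
      (fromBlocks 1 0 (Y * X) 1 : Matrix (l ⊕ n) (l ⊕ n) R) * fromBlocks A 0 0 (G - Y * X * Z) *
        (fromBlocks 1 (X * Z) 0 1 : Matrix (m ⊕ o) (m ⊕ o) R) := by
  simp only [fromBlocks_multiply, Matrix.one_mul, Matrix.mul_one, Matrix.zero_mul,
    Matrix.mul_zero, add_zero, zero_add]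
  rw [hY, ← Matrix.mul_assoc, hZ, ← Matrix.mul_assoc, add_sub_cancel]

section blocks

variable {ι : Type*} [NonUnitalNonAssocSemiring R]

def blockRow (t : ι → Matrix l o R) : Matrix l (ι × o) R :=
  of fun i b => t b.1 i b.2

def blockCol (t : ι → Matrix m o R) : Matrix (ι × m) o R :=
  of fun a j => t a.1 a.2 j

theorem mul_blockRow [Fintype l] (M : Matrix n l R) (t : ι → Matrix l o R) :
    M * blockRow t = blockRow fun k => M * t k := by
  ext i b
  simp only [blockRow, mul_apply, of_apply]

theorem blockCol_mul [Fintype l] (t : ι → Matrix n l R) (M : Matrix l o R) :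
    blockCol t * M = blockCol fun k => t k * M := by
  ext a j
  simp only [blockCol, mul_apply, of_apply]

end blocks

/-- The block Hankel matrix `(s_{j+k})_{j,k=0}^n`, with block rows indexed by `m ⊕ Fin n × m` so
that the first block row and column are split off. -/
def blockHankel {α : Type*} (s : ℕ → Matrix m o α) (n : ℕ) :
    Matrix (m ⊕ Fin n × m) (o ⊕ Fin n × o) α :=
  of fun a b =>
    s ((Sum.elim (fun _ => 0) (fun x => (x.1 : ℕ) + 1) a) +
       (Sum.elim (fun _ => 0) (fun x => (x.1 : ℕ) + 1) b))
      (Sum.elim id Prod.snd a) (Sum.elim id Prod.snd b)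

theorem blockHankel_eq_fromBlocks {α : Type*} (s : ℕ → Matrix m o α) (n : ℕ) :
    blockHankel s n =
      fromBlocks (s 0) (blockRow fun k : Fin n => s (k + 1)) (blockCol fun k : Fin n => s (k + 1))
        (of fun a b => s (a.1 + b.1 + 2) a.2 b.2) := by
  ext (i | ⟨j, i⟩) (k | ⟨l, k⟩) <;>
    simp only [blockHankel, blockRow, blockCol, fromBlocks, of_apply, Sum.elim_inl,
      Sum.elim_inr, id, zero_add, add_zero]
  rw [show (j : ℕ) + 1 + (l + 1) = j + l + 2 by omega]

end Matrix

theorem hankel_block_LDU_general {p q : ℕ} (n : ℕ)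
    (s : ℕ → Matrix (Fin p) (Fin q) ℂ)
    (sInv : Matrix (Fin q) (Fin p) ℂ) (hs : IsMPInv (s 0) sInv)
    (hdom : ∀ j, j ≤ 2 * n - 1 →
      LinearMap.range ((s j).mulVecLin) ≤ LinearMap.range ((s 0).mulVecLin) ∧
      LinearMap.ker ((s 0).mulVecLin) ≤ LinearMap.ker ((s j).mulVecLin))
    (y₁ : Matrix (Fin n × Fin p) (Fin q) ℂ)
    (hy : y₁ = Matrix.of fun a c => s ((a.1 : ℕ) + 1) a.2 c)
    (z₁ : Matrix (Fin p) (Fin n × Fin q) ℂ)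
    (hz : z₁ = Matrix.of fun i b => s ((b.1 : ℕ) + 1) i b.2)
    (G : Matrix (Fin n × Fin p) (Fin n × Fin q) ℂ)
    (hG : G = Matrix.of fun a b => s ((a.1 : ℕ) + (b.1 : ℕ) + 2) a.2 b.2)
    (L : Matrix (Fin n × Fin p) (Fin n × Fin q) ℂ)
    (hL : L = G - y₁ * sInv * z₁) :
    (Matrix.of fun (a : Fin p ⊕ Fin n × Fin p) (b : Fin q ⊕ Fin n × Fin q) =>
        s ((Sum.elim (fun _ => 0) (fun x => (x.1 : ℕ) + 1) a) +
           (Sum.elim (fun _ => 0) (fun x => (x.1 : ℕ) + 1) b))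
          (Sum.elim id Prod.snd a) (Sum.elim id Prod.snd b)) =
      (Matrix.fromBlocks 1 0 (y₁ * sInv) 1 :
        Matrix (Fin p ⊕ Fin n × Fin p) (Fin p ⊕ Fin n × Fin p) ℂ) *
        Matrix.fromBlocks (s 0) 0 0 L *
        (Matrix.fromBlocks 1 (sInv * z₁) 0 1 :
          Matrix (Fin q ⊕ Fin n × Fin q) (Fin q ⊕ Fin n × Fin q) ℂ) := by
  subst hy hz hG hL
  have hdom_succ (k : Fin n) := hdom (k + 1) (by omega)
  have hz₁ : s 0 * sInv * blockRow (fun k : Fin n => s (k + 1)) =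
      blockRow fun k : Fin n => s (k + 1) := by
    rw [mul_blockRow]
    exact congrArg blockRow (funext fun k => mul_mul_eq_of_range_le hs.1 (hdom_succ k).1)
  have hy₁ : blockCol (fun k : Fin n => s (k + 1)) * sInv * s 0 =
      blockCol fun k : Fin n => s (k + 1) := by
    rw [blockCol_mul, blockCol_mul]
    exact congrArg blockCol (funext fun k => mul_mul_eq_of_ker_le hs.1 (hdom_succ k).2)
  exact (blockHankel_eq_fromBlocks s n).trans
    (fromBlocks_eq_mul_fromBlocks_diagonal_mul _ _ _ _ _ hz₁ hy₁)

/-- Block LDU factorization of the block Hankel matrix H_n for a sequence whose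
truncation (s_j)_{j=0}^{2n-1} is dominated by its first term. -/
theorem hankel_block_LDU {p q : ℕ} (n : ℕ) (hn : 1 ≤ n)
    (s : ℕ → Matrix (Fin p) (Fin q) ℂ)
    (sInv : Matrix (Fin q) (Fin p) ℂ) (hs : IsMPInv (s 0) sInv)
    (hdom : ∀ j, j ≤ 2 * n - 1 →
      LinearMap.range ((s j).mulVecLin) ≤ LinearMap.range ((s 0).mulVecLin) ∧
      LinearMap.ker ((s 0).mulVecLin) ≤ LinearMap.ker ((s j).mulVecLin))
    (y₁ : Matrix (Fin n × Fin p) (Fin q) ℂ)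
    (hy : y₁ = Matrix.of fun a c => s ((a.1 : ℕ) + 1) a.2 c)
    (z₁ : Matrix (Fin p) (Fin n × Fin q) ℂ)
    (hz : z₁ = Matrix.of fun i b => s ((b.1 : ℕ) + 1) i b.2)
    (G : Matrix (Fin n × Fin p) (Fin n × Fin q) ℂ)
    (hG : G = Matrix.of fun a b => s ((a.1 : ℕ) + (b.1 : ℕ) + 2) a.2 b.2)
    (L : Matrix (Fin n × Fin p) (Fin n × Fin q) ℂ)
    (hL : L = G - y₁ * sInv * z₁) :
    (Matrix.of fun (a : Fin p ⊕ Fin n × Fin p) (b : Fin q ⊕ Fin n × Fin q) =>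
        s ((Sum.elim (fun _ => 0) (fun x => (x.1 : ℕ) + 1) a) +
           (Sum.elim (fun _ => 0) (fun x => (x.1 : ℕ) + 1) b))
          (Sum.elim id Prod.snd a) (Sum.elim id Prod.snd b)) =
      (Matrix.fromBlocks 1 0 (y₁ * sInv) 1 :
        Matrix (Fin p ⊕ Fin n × Fin p) (Fin p ⊕ Fin n × Fin p) ℂ) *
        Matrix.fromBlocks (s 0) 0 0 L *
        (Matrix.fromBlocks 1 (sInv * z₁) 0 1 :
          Matrix (Fin q ⊕ Fin n × Fin q) (Fin q ⊕ Fin n × Fin q) ℂ) :=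
  hankel_block_LDU_general n s sInv hs hdom y₁ hy z₁ hz G hG L hL
end

section
/- Let n ∈ ℕ₀ and let s₀,…,s_{2n} be complex q×q matrices such that the block Hankel matrix H_n = (s_{j+k})_{j,k=0}^n is nonnegative Hermitian (a Hankel nonnegative definite sequence). Then H_n is equivalent, via left multiplication by a lower unitriangular block matrix and right multiplication by an upper unitriangular block matrix, to the block diagonal matrix diag(L₀, L₁, …, L_n), where L₀ = s₀ and for j ≥ 1, L_j is the Schur complement of H_{j−1} in H_j (using Moore–Penrose inverses). -/
open Matrix
open scoped ComplexOrder

/-- The block Hankel matrix `(s_{j+k})_{j,k=0}^n`. -/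
def hankSq (q : ℕ) (s : ℕ → Matrix (Fin q) (Fin q) ℂ) (n : ℕ) :
    Matrix (Fin (n+1) × Fin q) (Fin (n+1) × Fin q) ℂ :=
  Matrix.of fun a b => s ((a.1 : ℕ) + (b.1 : ℕ)) a.2 b.2

/-- Block lower triangular with identity diagonal blocks. -/
def BlockLowerUni {q n : ℕ}
    (L : Matrix (Fin (n+1) × Fin q) (Fin (n+1) × Fin q) ℂ) : Prop :=
  (∀ a b : Fin (n+1), ∀ i k : Fin q, (a : ℕ) < (b : ℕ) → L (a, i) (b, k) = 0) ∧
  (∀ a : Fin (n+1), ∀ i k : Fin q, L (a, i) (a, k) = if i = k then 1 else 0)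

/-- Block upper triangular with identity diagonal blocks. -/
def BlockUpperUni {q n : ℕ}
    (U : Matrix (Fin (n+1) × Fin q) (Fin (n+1) × Fin q) ℂ) : Prop :=
  (∀ a b : Fin (n+1), ∀ i k : Fin q, (b : ℕ) < (a : ℕ) → U (a, i) (b, k) = 0) ∧
  (∀ a : Fin (n+1), ∀ i k : Fin q, U (a, i) (a, k) = if i = k then 1 else 0)

section helpers

variable {N F : Type*} [Fintype N] [Fintype F] [DecidableEq N] [DecidableEq F]

lemma colkill {H : Matrix N N ℂ} {B : Matrix N F ℂ} {C : Matrix F N ℂ} {S : Matrix F F ℂ}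
    (hpsd : (fromBlocks H B C S).PosSemidef) {Z : Matrix N N ℂ} (hZ : H * Z = 0) :
    C * Z = 0 := by
  have key : ∀ v : N → ℂ, H *ᵥ v = 0 → C *ᵥ v = 0 := by
    intro v hv
    have h0 : star (Sum.elim v (0 : F → ℂ)) ⬝ᵥ (fromBlocks H B C S) *ᵥ (Sum.elim v 0) = 0 := by
      rw [fromBlocks_mulVec]
      simp [hv, dotProduct, Fintype.sum_sum_type]
    have h1 := (hpsd.dotProduct_mulVec_zero_iff _).mp h0
    rw [fromBlocks_mulVec] at h1
    funext k
    simpa [hv] using congr_fun h1 (Sum.inr k)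
  ext k j
  have hcol : H *ᵥ (fun a => Z a j) = 0 := by
    funext i
    simpa [mulVec, dotProduct, mul_apply] using congr_fun (congr_fun hZ i) j
  simpa [mul_apply, mulVec, dotProduct] using congr_fun (key _ hcol) k

lemma schur_step {H : Matrix N N ℂ} {B : Matrix N F ℂ} {C : Matrix F N ℂ} {S : Matrix F F ℂ}
    (hpsd : (fromBlocks H B C S).PosSemidef) {X : Matrix N N ℂ}
    (h1 : H * X * H = H) (h3 : (H * X)ᴴ = H * X) :
    fromBlocks 1 0 (-(C * X)) 1 * fromBlocks H B C S * fromBlocks 1 (-(X * B)) 0 1 =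
      fromBlocks H 0 0 (S - C * X * B) := by
  have hHerm := hpsd.1
  rw [IsHermitian, fromBlocks_conjTranspose] at hHerm
  have hH : Hᴴ = H := by
    funext i j; simpa using congr_fun (congr_fun hHerm (Sum.inl i)) (Sum.inl j)
  have hBC : Cᴴ = B := by
    funext i j; simpa using congr_fun (congr_fun hHerm (Sum.inl i)) (Sum.inr j)
  have hCQ : C * (1 - X * H) = 0 := by
    apply colkill hpsd
    rw [Matrix.mul_sub, Matrix.mul_one, ← Matrix.mul_assoc, h1, sub_self]
  have hC : C * X * H = C := by
    rw [Matrix.mul_sub, Matrix.mul_one] at hCQ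
    rw [Matrix.mul_assoc]
    exact (sub_eq_zero.mp hCQ).symm
  have hHP : H * (1 - H * X) = 0 := by
    have h5 : (1 - H * X) * H = 0 := by
      rw [Matrix.sub_mul, Matrix.one_mul, h1, sub_self]
    calc H * (1 - H * X) = ((1 - H * X)ᴴ * Hᴴ)ᴴ := by
          rw [← conjTranspose_mul, conjTranspose_conjTranspose]
      _ = 0 := by
          rw [conjTranspose_sub, conjTranspose_one, h3, hH, h5, conjTranspose_zero]
  have hCP : C * (1 - H * X) = 0 := colkill hpsd hHP
  have hB : H * X * B = B := by
    have h6 : (1 - H * X) * B = 0 := by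
      rw [← hBC, ← conjTranspose_zero, ← hCP]
      rw [conjTranspose_mul, conjTranspose_sub, conjTranspose_one, h3]
    rw [Matrix.sub_mul, Matrix.one_mul] at h6
    exact (sub_eq_zero.mp h6).symm
  rw [fromBlocks_multiply, fromBlocks_multiply]
  simp only [Matrix.one_mul, Matrix.mul_one, Matrix.zero_mul, Matrix.mul_zero,
    add_zero, zero_add, Matrix.neg_mul, Matrix.mul_neg, neg_add_eq_sub]
  simp only [← Matrix.mul_assoc, hC, hB, sub_self, Matrix.zero_mul, sub_zero]

end helpers

/-- Splitting `Fin (n+2) × Fin q` into the first `n+1` block rows and the last one. -/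
def sumEquiv (n q : ℕ) : ((Fin (n+1) × Fin q) ⊕ Fin q) ≃ (Fin (n+1+1) × Fin q) where
  toFun := Sum.elim (fun p => (p.1.castSucc, p.2)) (fun k => (Fin.last (n+1), k))
  invFun p := Fin.lastCases (Sum.inr p.2) (fun a => Sum.inl (a, p.2)) p.1
  left_inv := by rintro (⟨a,i⟩|k) <;> simp
  right_inv := by rintro ⟨a,i⟩; induction a using Fin.lastCases <;> simp

@[simp] lemma sumEquiv_symm_last (n q : ℕ) (k : Fin q) :
    (sumEquiv n q).symm (Fin.last (n+1), k) = Sum.inr k := by simp [sumEquiv]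

@[simp] lemma sumEquiv_symm_castSucc (n q : ℕ) (a : Fin (n+1)) (i : Fin q) :
    (sumEquiv n q).symm (a.castSucc, i) = Sum.inl (a, i) := by simp [sumEquiv]

lemma lower_pullback {q n : ℕ} {L' : Matrix (Fin (n+1) × Fin q) (Fin (n+1) × Fin q) ℂ}
    (h : BlockLowerUni L') (X : Matrix (Fin q) (Fin (n+1) × Fin q) ℂ) :
    BlockLowerUni ((fromBlocks L' 0 X 1).submatrix (sumEquiv n q).symm (sumEquiv n q).symm) := by
  constructor
  · intro a b i k hab
    induction b using Fin.lastCases with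
    | last =>
      induction a using Fin.lastCases with
      | last => exact absurd hab (lt_irrefl _)
      | cast a' => simp [submatrix_apply]
    | cast b' =>
      induction a using Fin.lastCases with
      | last =>
        exfalso
        have h1 : (b' : ℕ) < n + 1 := b'.is_lt
        simp only [Fin.val_last, Fin.coe_castSucc] at hab; omega
      | cast a' =>
        simp only [submatrix_apply, sumEquiv_symm_castSucc, fromBlocks_apply₁₁]
        exact h.1 a' b' i k (by simpa using hab)
  · intro a i k
    induction a using Fin.lastCases with
    | last => simp [submatrix_apply, Matrix.one_apply]
    | cast a' =>
      simp only [submatrix_apply, sumEquiv_symm_castSucc, fromBlocks_apply₁₁]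
      exact h.2 a' i k

lemma upper_pullback {q n : ℕ} {U' : Matrix (Fin (n+1) × Fin q) (Fin (n+1) × Fin q) ℂ}
    (h : BlockUpperUni U') (Y : Matrix (Fin (n+1) × Fin q) (Fin q) ℂ) :
    BlockUpperUni ((fromBlocks U' Y 0 1).submatrix (sumEquiv n q).symm (sumEquiv n q).symm) := by
  constructor
  · intro a b i k hab
    induction a using Fin.lastCases with
    | last =>
      induction b using Fin.lastCases with
      | last => exact absurd hab (lt_irrefl _)
      | cast b' => simp [submatrix_apply]
    | cast a' =>
      induction b using Fin.lastCases with
      | last =>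
        exfalso
        have h1 : (a' : ℕ) < n + 1 := a'.is_lt
        simp only [Fin.val_last, Fin.coe_castSucc] at hab; omega
      | cast b' =>
        simp only [submatrix_apply, sumEquiv_symm_castSucc, fromBlocks_apply₁₁]
        exact h.1 a' b' i k (by simpa using hab)
  · intro a i k
    induction a using Fin.lastCases with
    | last => simp [submatrix_apply, Matrix.one_apply]
    | cast a' =>
      simp only [submatrix_apply, sumEquiv_symm_castSucc, fromBlocks_apply₁₁]
      exact h.2 a' i k

/-- A nonnegative Hermitian block Hankel matrix is equivalent, via unitriangular
block factors, to the block diagonal matrix of the Schur complements L_j. -/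
theorem hankel_equiv_diag_schur {q : ℕ} (n : ℕ)
    (s : ℕ → Matrix (Fin q) (Fin q) ℂ)
    (hpsd : (hankSq q s n).PosSemidef)
    (Hinv : (j : ℕ) → Matrix (Fin (j+1) × Fin q) (Fin (j+1) × Fin q) ℂ)
    (hHinv : ∀ j, j < n → IsMPInv (hankSq q s j) (Hinv j))
    (Lseq : ℕ → Matrix (Fin q) (Fin q) ℂ)
    (hL0 : Lseq 0 = s 0)
    (hLs : ∀ j, j < n → Lseq (j+1) =
      s (2 * (j+1)) -
        (Matrix.of fun (i : Fin q) (b : Fin (j+1) × Fin q) =>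
          s ((j+1) + (b.1 : ℕ)) i b.2) *
        Hinv j *
        (Matrix.of fun (a : Fin (j+1) × Fin q) (k : Fin q) =>
          s ((j+1) + (a.1 : ℕ)) a.2 k)) :
    ∃ L U, BlockLowerUni L ∧ BlockUpperUni U ∧
      (Matrix.of fun (a b : Fin (n+1) × Fin q) =>
        if a.1 = b.1 then Lseq (a.1 : ℕ) a.2 b.2 else 0) =
        L * hankSq q s n * U := by
  induction n with
  | zero =>
    refine ⟨1, 1, ⟨?_, ?_⟩, ⟨?_, ?_⟩, ?_⟩
    · intro a b i k hab
      have := a.is_lt; have := b.is_lt; omega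
    · intro a i k; simp [Matrix.one_apply, Prod.ext_iff]
    · intro a b i k hab
      have := a.is_lt; have := b.is_lt; omega
    · intro a i k; simp [Matrix.one_apply, Prod.ext_iff]
    · rw [Matrix.one_mul, Matrix.mul_one]
      ext ⟨a, i⟩ ⟨b, k⟩
      have hab : a = b := Fin.ext (by have := a.is_lt; have := b.is_lt; omega)
      subst hab
      have h0 : (a : ℕ) = 0 := by have := a.is_lt; omega
      simp [hankSq, hL0, h0]
  | succ n ih =>
    have hsub : hankSq q s n = (hankSq q s (n+1)).submatrix
        (fun p : Fin (n+1) × Fin q => (p.1.castSucc, p.2))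
        (fun p : Fin (n+1) × Fin q => (p.1.castSucc, p.2)) := by
      ext ⟨a, i⟩ ⟨b, k⟩
      simp [hankSq]
    have hpsd' : (hankSq q s n).PosSemidef := by
      rw [hsub]; exact hpsd.submatrix _
    obtain ⟨L', U', hL', hU', hD⟩ :=
      ih hpsd' (fun j hj => hHinv j (by omega)) (fun j hj => hLs j (by omega))
    set e := sumEquiv n q with he
    set Hn := hankSq q s n with hHn
    set X := Hinv n with hX
    set B := (Matrix.of fun (a : Fin (n+1) × Fin q) (k : Fin q) =>
      s ((n+1) + (a.1 : ℕ)) a.2 k) with hB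
    set C := (Matrix.of fun (i : Fin q) (b : Fin (n+1) × Fin q) =>
      s ((n+1) + (b.1 : ℕ)) i b.2) with hC
    set S := s (2 * (n+1)) with hS
    have hM' : (hankSq q s (n+1)).submatrix e e = fromBlocks Hn B C S := by
      ext x y
      rcases x with ⟨a, i⟩ | k <;> rcases y with ⟨b, j⟩ | l
      · simp [hankSq, e, sumEquiv, Hn]
      · simp [hankSq, e, sumEquiv, hB, add_comm]
      · simp [hankSq, e, sumEquiv, hC]
      · simp [hankSq, e, sumEquiv, hS, two_mul]
    have hpsdM' : (fromBlocks Hn B C S).PosSemidef := by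
      rw [← hM']; exact hpsd.submatrix e
    have hMP := hHinv n (Nat.lt_succ_self n)
    have hstep := schur_step hpsdM' hMP.1 hMP.2.2.1
    have hLn : Lseq (n+1) = S - C * X * B := hLs n (Nat.lt_succ_self n)
    refine ⟨(fromBlocks L' 0 (-(C * X)) 1).submatrix e.symm e.symm,
            (fromBlocks U' (-(X * B)) 0 1).submatrix e.symm e.symm,
            lower_pullback hL' _, upper_pullback hU' _, ?_⟩
    have hbig : hankSq q s (n+1) = (fromBlocks Hn B C S).submatrix e.symm e.symm := by
      rw [← hM', submatrix_submatrix, Equiv.self_comp_symm, submatrix_id_id]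
    rw [hbig, submatrix_mul_equiv, submatrix_mul_equiv]
    have hfact : fromBlocks L' 0 (-(C * X)) 1 * fromBlocks Hn B C S *
        fromBlocks U' (-(X * B)) 0 1
        = fromBlocks (L' * Hn * U') 0 0 (Lseq (n+1)) := by
      have e1 : fromBlocks L' (0 : Matrix (Fin (n+1) × Fin q) (Fin q) ℂ) (-(C * X)) 1 =
          fromBlocks L' 0 0 1 * fromBlocks 1 0 (-(C * X)) 1 := by
        rw [fromBlocks_multiply]; simp
      have e2 : fromBlocks U' (-(X * B)) (0 : Matrix (Fin q) (Fin (n+1) × Fin q) ℂ) 1 =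
          fromBlocks 1 (-(X * B)) 0 1 * fromBlocks U' 0 0 1 := by
        rw [fromBlocks_multiply]; simp
      calc fromBlocks L' 0 (-(C * X)) 1 * fromBlocks Hn B C S * fromBlocks U' (-(X * B)) 0 1
          = fromBlocks L' 0 0 1 *
            (fromBlocks 1 0 (-(C * X)) 1 * fromBlocks Hn B C S * fromBlocks 1 (-(X * B)) 0 1) *
            fromBlocks U' 0 0 1 := by
            rw [e1, e2]; simp only [Matrix.mul_assoc]
        _ = fromBlocks L' 0 0 1 * fromBlocks Hn 0 0 (Lseq (n+1)) * fromBlocks U' 0 0 1 := by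
            rw [hstep, hLn]
        _ = fromBlocks (L' * Hn * U') 0 0 (Lseq (n+1)) := by
            rw [fromBlocks_multiply, fromBlocks_multiply]; simp
    rw [hfact, ← hD]
    ext ⟨a, i⟩ ⟨b, k⟩
    induction a using Fin.lastCases with
    | last =>
      induction b using Fin.lastCases with
      | last => simp [submatrix_apply, he, Fin.val_last]
      | cast b' =>
        have : Fin.last (n+1) ≠ b'.castSucc := (Fin.castSucc_lt_last b').ne'
        simp [submatrix_apply, he, this]
    | cast a' =>
      induction b using Fin.lastCases with
      | last =>
        have : a'.castSucc ≠ Fin.last (n+1) := (Fin.castSucc_lt_last a').ne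
        simp [submatrix_apply, he, this]
      | cast b' =>
        by_cases hab : a' = b'
        · subst hab
          simp [submatrix_apply, he]
        · have h2 : a'.castSucc ≠ b'.castSucc := by
            simpa [Fin.castSucc_inj] using hab
          simp [submatrix_apply, he, hab, h2]
end

section
/- Let n ∈ ℕ₀, let s₀,…,s_{2n} be a Hankel nonnegative definite sequence of complex q×q matrices (i.e., H_n = (s_{j+k})_{j,k=0}^n ≽ 0), and let A₀,…,A_n be complex q×q matrices. If H_n ∼ diag(A₀,…,A_n) (equivalence by lower/upper unitriangular block factors), then A_j = L_j for all j ∈ {0,…,n}, where L₀ = s₀ and L_j is the Schur complement of H_{j−1} in H_j. -/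
open Matrix
open scoped ComplexOrder

namespace HankelProof

variable {q : ℕ}

/-! ### Invertibility of block unitriangular matrices -/

lemma upperUni_isUnit_det {n : ℕ} (U : Matrix (Fin (n+1) × Fin q) (Fin (n+1) × Fin q) ℂ)
    (hU : BlockUpperUni U) : IsUnit U.det := by
  have hbt : U.BlockTriangular (fun p => (p.1 : ℕ)) := by
    rintro ⟨a, i⟩ ⟨b, k⟩ h
    exact hU.1 a b i k h
  rw [hbt.det]
  have : ∀ a ∈ Finset.univ.image (fun p : Fin (n+1) × Fin q => (p.1 : ℕ)),
      (U.toSquareBlock (fun p => (p.1 : ℕ)) a).det = 1 := by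
    intro a _
    have : U.toSquareBlock (fun p => (p.1 : ℕ)) a = 1 := by
      ext ⟨p, hp⟩ ⟨p', hp'⟩
      have h1 : p.1 = p'.1 := Fin.ext (hp.trans hp'.symm)
      have h3 : U p p' = if p.2 = p'.2 then 1 else 0 := by
        have := hU.2 p.1 p.2 p'.2
        rw [show p = (p.1, p.2) from rfl, show p' = (p'.1, p'.2) from rfl, ← h1]
        exact this
      simp only [Matrix.toSquareBlock_def, Matrix.of_apply, h3, Matrix.one_apply,
        Subtype.ext_iff, Prod.ext_iff, h1]
      by_cases h2 : p.2 = p'.2 <;> simp [h2]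
    rw [this, Matrix.det_one]
  rw [Finset.prod_congr rfl this, Finset.prod_const_one]
  exact isUnit_one

lemma lowerUni_isUnit_det {n : ℕ} (L : Matrix (Fin (n+1) × Fin q) (Fin (n+1) × Fin q) ℂ)
    (hL : BlockLowerUni L) : IsUnit L.det := by
  rw [← Matrix.det_transpose]
  refine upperUni_isUnit_det Lᵀ ⟨fun a b i k h => hL.1 b a k i h, fun a i k => ?_⟩
  rw [Matrix.transpose_apply, hL.2]
  by_cases h : i = k <;> simp [h]
  · exact fun h' => absurd h'.symm h

lemma mul_upperUni_cancel {n : ℕ} {m : Type*} [Fintype m]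
    (U : Matrix (Fin (n+1) × Fin q) (Fin (n+1) × Fin q) ℂ) (hU : BlockUpperUni U)
    (X : Matrix m (Fin (n+1) × Fin q) ℂ) (h : X * U = 0) : X = 0 := by
  have := upperUni_isUnit_det U hU
  calc X = X * U * U⁻¹ := by rw [Matrix.mul_assoc, Matrix.mul_nonsing_inv U this, Matrix.mul_one]
  _ = 0 := by rw [h, Matrix.zero_mul]

lemma lowerUni_mul_cancel {n : ℕ} {m : Type*} [Fintype m]
    (L : Matrix (Fin (n+1) × Fin q) (Fin (n+1) × Fin q) ℂ) (hL : BlockLowerUni L)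
    (Y : Matrix (Fin (n+1) × Fin q) m ℂ) (h : L * Y = 0) : Y = 0 := by
  have := lowerUni_isUnit_det L hL
  calc Y = L⁻¹ * (L * Y) := by
        rw [← Matrix.mul_assoc, Matrix.nonsing_inv_mul L this, Matrix.one_mul]
  _ = 0 := by rw [h, Matrix.mul_zero]

lemma upperUni_one (U : Matrix (Fin (0+1) × Fin q) (Fin (0+1) × Fin q) ℂ)
    (hU : BlockUpperUni U) : U = 1 := by
  ext ⟨a, i⟩ ⟨b, k⟩
  have hab : a = b := Fin.ext (by omega)
  subst hab
  rw [hU.2 a i k, Matrix.one_apply]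
  by_cases h : i = k <;> simp [h, Prod.ext_iff]

lemma lowerUni_one (L : Matrix (Fin (0+1) × Fin q) (Fin (0+1) × Fin q) ℂ)
    (hL : BlockLowerUni L) : L = 1 := by
  ext ⟨a, i⟩ ⟨b, k⟩
  have hab : a = b := Fin.ext (by omega)
  subst hab
  rw [hL.2 a i k, Matrix.one_apply]
  by_cases h : i = k <;> simp [h, Prod.ext_iff]

/-! ### Restriction to leading principal block submatrices -/

/-- The embedding of a leading block index set. -/
def emb {n j : ℕ} (h : j ≤ n) : Fin (j+1) × Fin q → Fin (n+1) × Fin q :=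
  fun p => (Fin.castLE (Nat.succ_le_succ h) p.1, p.2)

lemma emb_inj {n j : ℕ} (h : j ≤ n) : Function.Injective (emb (q := q) h) := by
  rintro ⟨a, i⟩ ⟨b, k⟩ hab
  simp only [emb, Prod.mk.injEq] at hab
  exact Prod.ext (Fin.castLE_injective _ hab.1) hab.2

lemma mem_range_emb {n j : ℕ} (h : j ≤ n) (c : Fin (n+1) × Fin q) :
    c ∈ Set.range (emb (q := q) h) ↔ (c.1 : ℕ) < j + 1 := by
  constructor
  · rintro ⟨p, rfl⟩
    exact p.1.isLt
  · intro hc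
    exact ⟨((⟨(c.1 : ℕ), hc⟩ : Fin (j+1)), c.2), Prod.ext (Fin.ext rfl) rfl⟩

lemma sum_range_emb {n j : ℕ} (h : j ≤ n) (g : Fin (n+1) × Fin q → ℂ)
    (hg : ∀ c, ¬ ((c.1 : ℕ) < j + 1) → g c = 0) :
    ∑ c, g c = ∑ c', g (emb (q := q) h c') := by
  rw [← Finset.sum_image (f := g) (g := emb (q := q) h) (s := Finset.univ)
      (fun x _ y _ hxy => emb_inj h hxy)]
  refine (Finset.sum_subset (Finset.subset_univ _) ?_).symm
  intro c _ hc
  refine hg c fun hlt => hc ?_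
  obtain ⟨p, hp⟩ := (mem_range_emb h c).2 hlt
  exact Finset.mem_image.mpr ⟨p, Finset.mem_univ _, hp⟩

lemma submatrix_mul_emb_left {n j : ℕ} (h : j ≤ n)
    (L M : Matrix (Fin (n+1) × Fin q) (Fin (n+1) × Fin q) ℂ)
    (hL : BlockLowerUni L) :
    (L * M).submatrix (emb h) (emb h) =
      L.submatrix (emb h) (emb h) * M.submatrix (emb h) (emb h) := by
  ext a b
  simp only [Matrix.submatrix_apply, Matrix.mul_apply]
  refine sum_range_emb h _ fun c hc => ?_
  have : ((emb (q := q) h a).1 : ℕ) < (c.1 : ℕ) :=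
    lt_of_le_of_lt (Nat.lt_succ_iff.mp a.1.isLt) (not_lt.mp hc)
  rw [show L (emb h a) c = 0 from ?_, zero_mul]
  rw [show emb (q := q) h a = ((emb (q := q) h a).1, (emb (q := q) h a).2) from rfl,
    show c = (c.1, c.2) from rfl]
  exact hL.1 _ _ _ _ this

lemma submatrix_mul_emb_right {n j : ℕ} (h : j ≤ n)
    (M U : Matrix (Fin (n+1) × Fin q) (Fin (n+1) × Fin q) ℂ)
    (hU : BlockUpperUni U) :
    (M * U).submatrix (emb h) (emb h) =
      M.submatrix (emb h) (emb h) * U.submatrix (emb h) (emb h) := by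
  ext a b
  simp only [Matrix.submatrix_apply, Matrix.mul_apply]
  refine sum_range_emb h _ fun c hc => ?_
  have : ((emb (q := q) h b).1 : ℕ) < (c.1 : ℕ) :=
    lt_of_le_of_lt (Nat.lt_succ_iff.mp b.1.isLt) (not_lt.mp hc)
  rw [show U c (emb h b) = 0 from ?_, mul_zero]
  rw [show emb (q := q) h b = ((emb (q := q) h b).1, (emb (q := q) h b).2) from rfl,
    show c = (c.1, c.2) from rfl]
  exact hU.1 _ _ _ _ this

lemma hankSq_submatrix {n j : ℕ} (h : j ≤ n) (s : ℕ → Matrix (Fin q) (Fin q) ℂ) :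
    (hankSq q s n).submatrix (emb h) (emb h) = hankSq q s j := by
  ext a b
  simp [hankSq, emb]

lemma lower_submatrix {n j : ℕ} (h : j ≤ n)
    (L : Matrix (Fin (n+1) × Fin q) (Fin (n+1) × Fin q) ℂ) (hL : BlockLowerUni L) :
    BlockLowerUni (L.submatrix (emb h) (emb h)) :=
  ⟨fun a b i k hab => hL.1 _ _ i k hab, fun a i k => hL.2 _ i k⟩

lemma upper_submatrix {n j : ℕ} (h : j ≤ n)
    (U : Matrix (Fin (n+1) × Fin q) (Fin (n+1) × Fin q) ℂ) (hU : BlockUpperUni U) :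
    BlockUpperUni (U.submatrix (emb h) (emb h)) :=
  ⟨fun a b i k hab => hU.1 _ _ i k hab, fun a i k => hU.2 _ i k⟩

/-! ### Splitting off the last block row/column -/

lemma sum_split (j : ℕ) (f : Fin (j+1+1) × Fin q → ℂ) :
    ∑ p, f p = (∑ c : Fin (j+1) × Fin q, f (emb (Nat.le_succ j) c)) +
      ∑ i, f (Fin.last (j+1), i) := by
  rw [Fintype.sum_prod_type, Fin.sum_univ_castSucc, Fintype.sum_prod_type]
  rfl

def xRow (j : ℕ) (L : Matrix (Fin (j+1+1) × Fin q) (Fin (j+1+1) × Fin q) ℂ) :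
    Matrix (Fin q) (Fin (j+1) × Fin q) ℂ :=
  Matrix.of fun i c => L (Fin.last (j+1), i) (emb (Nat.le_succ j) c)

def yCol (j : ℕ) (U : Matrix (Fin (j+1+1) × Fin q) (Fin (j+1+1) × Fin q) ℂ) :
    Matrix (Fin (j+1) × Fin q) (Fin q) ℂ :=
  Matrix.of fun d k => U (emb (Nat.le_succ j) d) (Fin.last (j+1), k)

def crow (j : ℕ) (s : ℕ → Matrix (Fin q) (Fin q) ℂ) :
    Matrix (Fin q) (Fin (j+1) × Fin q) ℂ :=
  Matrix.of fun i b => s ((j+1) + (b.1 : ℕ)) i b.2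

def bcol (j : ℕ) (s : ℕ → Matrix (Fin q) (Fin q) ℂ) :
    Matrix (Fin (j+1) × Fin q) (Fin q) ℂ :=
  Matrix.of fun a k => s ((j+1) + (a.1 : ℕ)) a.2 k

lemma LH_small (j : ℕ) (s : ℕ → Matrix (Fin q) (Fin q) ℂ)
    (L : Matrix (Fin (j+1+1) × Fin q) (Fin (j+1+1) × Fin q) ℂ) (hL : BlockLowerUni L)
    (i : Fin q) (d : Fin (j+1) × Fin q) :
    (L * hankSq q s (j+1)) (Fin.last (j+1), i) (emb (Nat.le_succ j) d) =
      (xRow j L * hankSq q s j + crow j s) i d := by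
  rw [Matrix.mul_apply, sum_split, Matrix.add_apply, Matrix.mul_apply]
  have e1 : (∑ c : Fin (j+1) × Fin q,
      L (Fin.last (j+1), i) (emb (Nat.le_succ j) c) *
        hankSq q s (j+1) (emb (Nat.le_succ j) c) (emb (Nat.le_succ j) d)) =
      ∑ c : Fin (j+1) × Fin q, xRow j L i c * hankSq q s j c d := by
    refine Finset.sum_congr rfl fun c _ => ?_
    simp [xRow, hankSq, emb]
  have e2 : (∑ i' : Fin q,
      L (Fin.last (j+1), i) (Fin.last (j+1), i') *
        hankSq q s (j+1) (Fin.last (j+1), i') (emb (Nat.le_succ j) d)) = crow j s i d := by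
    have hd : ∀ i', L (Fin.last (j+1), i) (Fin.last (j+1), i') = if i = i' then 1 else 0 :=
      fun i' => hL.2 _ i i'
    simp only [hd, ite_mul, one_mul, zero_mul, Finset.sum_ite_eq, Finset.mem_univ, if_true]
    simp [hankSq, emb, crow, Fin.val_last]
  rw [e1, e2]

lemma LH_last (j : ℕ) (s : ℕ → Matrix (Fin q) (Fin q) ℂ)
    (L : Matrix (Fin (j+1+1) × Fin q) (Fin (j+1+1) × Fin q) ℂ) (hL : BlockLowerUni L)
    (i k : Fin q) :
    (L * hankSq q s (j+1)) (Fin.last (j+1), i) (Fin.last (j+1), k) =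
      (xRow j L * bcol j s) i k + s ((j+1) + (j+1)) i k := by
  rw [Matrix.mul_apply, sum_split, Matrix.mul_apply]
  have e1 : (∑ c : Fin (j+1) × Fin q,
      L (Fin.last (j+1), i) (emb (Nat.le_succ j) c) *
        hankSq q s (j+1) (emb (Nat.le_succ j) c) (Fin.last (j+1), k)) =
      ∑ c : Fin (j+1) × Fin q, xRow j L i c * bcol j s c k := by
    refine Finset.sum_congr rfl fun c _ => ?_
    simp [xRow, hankSq, bcol, emb, Fin.val_last, Nat.add_comm]
  have e2 : (∑ i' : Fin q,
      L (Fin.last (j+1), i) (Fin.last (j+1), i') *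
        hankSq q s (j+1) (Fin.last (j+1), i') (Fin.last (j+1), k)) =
      s ((j+1) + (j+1)) i k := by
    have hd : ∀ i', L (Fin.last (j+1), i) (Fin.last (j+1), i') = if i = i' then 1 else 0 :=
      fun i' => hL.2 _ i i'
    simp only [hd, ite_mul, one_mul, zero_mul, Finset.sum_ite_eq, Finset.mem_univ, if_true]
    simp [hankSq, Fin.val_last]
  rw [e1, e2]

lemma HU_small (j : ℕ) (s : ℕ → Matrix (Fin q) (Fin q) ℂ)
    (U : Matrix (Fin (j+1+1) × Fin q) (Fin (j+1+1) × Fin q) ℂ) (hU : BlockUpperUni U)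
    (c : Fin (j+1) × Fin q) (k : Fin q) :
    (hankSq q s (j+1) * U) (emb (Nat.le_succ j) c) (Fin.last (j+1), k) =
      (hankSq q s j * yCol j U + bcol j s) c k := by
  rw [Matrix.mul_apply, sum_split, Matrix.add_apply, Matrix.mul_apply]
  have e1 : (∑ d : Fin (j+1) × Fin q,
      hankSq q s (j+1) (emb (Nat.le_succ j) c) (emb (Nat.le_succ j) d) *
        U (emb (Nat.le_succ j) d) (Fin.last (j+1), k)) =
      ∑ d : Fin (j+1) × Fin q, hankSq q s j c d * yCol j U d k := by
    refine Finset.sum_congr rfl fun d _ => ?_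
    simp [yCol, hankSq, emb]
  have e2 : (∑ k' : Fin q,
      hankSq q s (j+1) (emb (Nat.le_succ j) c) (Fin.last (j+1), k') *
        U (Fin.last (j+1), k') (Fin.last (j+1), k)) = bcol j s c k := by
    have hd : ∀ k', U (Fin.last (j+1), k') (Fin.last (j+1), k) = if k' = k then 1 else 0 :=
      fun k' => hU.2 _ k' k
    simp only [hd, mul_ite, mul_one, mul_zero, Finset.sum_ite_eq', Finset.mem_univ, if_true]
    simp [hankSq, emb, bcol, Fin.val_last, Nat.add_comm]
  rw [e1, e2]

/-! ### The key lemma: extraction of the last diagonal block -/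

lemma key (j : ℕ) (s : ℕ → Matrix (Fin q) (Fin q) ℂ)
    (L U : Matrix (Fin (j+1+1) × Fin q) (Fin (j+1+1) × Fin q) ℂ)
    (hL : BlockLowerUni L) (hU : BlockUpperUni U)
    (A : Matrix (Fin q) (Fin q) ℂ)
    (hdiag : ∀ i k : Fin q,
      (L * hankSq q s (j+1) * U) (Fin.last (j+1), i) (Fin.last (j+1), k) = A i k)
    (hrow : ∀ (p : Fin (j+1) × Fin q) (i : Fin q),
      (L * hankSq q s (j+1) * U) (Fin.last (j+1), i) (emb (Nat.le_succ j) p) = 0)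
    (hcol : ∀ (p : Fin (j+1) × Fin q) (k : Fin q),
      (L * hankSq q s (j+1) * U) (emb (Nat.le_succ j) p) (Fin.last (j+1), k) = 0)
    (X : Matrix (Fin (j+1) × Fin q) (Fin (j+1) × Fin q) ℂ)
    (hX : hankSq q s j * X * hankSq q s j = hankSq q s j) :
    A = s (2*(j+1)) -
      (Matrix.of fun (i : Fin q) (b : Fin (j+1) × Fin q) => s ((j+1) + (b.1 : ℕ)) i b.2) * X *
      (Matrix.of fun (a : Fin (j+1) × Fin q) (k : Fin q) => s ((j+1) + (a.1 : ℕ)) a.2 k) := by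
  set H₀ := hankSq q s j with hH₀
  set x := xRow j L with hx
  set y := yCol j U with hy
  -- row constraint : (x * H₀ + crow) * U₀ = 0
  have hrow' : x * H₀ + crow j s = 0 := by
    refine mul_upperUni_cancel (U.submatrix (emb (Nat.le_succ j)) (emb (Nat.le_succ j)))
      (upper_submatrix _ U hU) _ ?_
    ext i p
    have h0 := hrow p i
    rw [Matrix.mul_apply, sum_split] at h0
    have hlastzero : ∀ k', (L * hankSq q s (j+1)) (Fin.last (j+1), i) (Fin.last (j+1), k') *
        U (Fin.last (j+1), k') (emb (Nat.le_succ j) p) = 0 := by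
      intro k'
      rw [show U (Fin.last (j+1), k') (emb (Nat.le_succ j) p) = 0 from
        hU.1 _ _ k' p.2 (by simpa [emb, Fin.val_last] using p.1.isLt), mul_zero]
    rw [Finset.sum_congr rfl (fun k' _ => hlastzero k'), Finset.sum_const_zero, add_zero] at h0
    rw [Matrix.zero_apply, Matrix.mul_apply, ← h0]
    refine Finset.sum_congr rfl fun c _ => ?_
    rw [LH_small j s L hL i c]
    rfl
  -- column constraint : L₀ * (H₀ * y + bcol) = 0
  have hcol' : H₀ * y + bcol j s = 0 := by
    refine lowerUni_mul_cancel (L.submatrix (emb (Nat.le_succ j)) (emb (Nat.le_succ j)))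
      (lower_submatrix _ L hL) _ ?_
    ext p k
    have h0 := hcol p k
    rw [Matrix.mul_assoc, Matrix.mul_apply, sum_split] at h0
    have hlastzero : ∀ k', L (emb (Nat.le_succ j) p) (Fin.last (j+1), k') *
        (hankSq q s (j+1) * U) (Fin.last (j+1), k') (Fin.last (j+1), k) = 0 := by
      intro k'
      rw [show L (emb (Nat.le_succ j) p) (Fin.last (j+1), k') = 0 from ?_, zero_mul]
      rw [show emb (q := q) (Nat.le_succ j) p =
        ((emb (q := q) (Nat.le_succ j) p).1, (emb (q := q) (Nat.le_succ j) p).2) from rfl]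
      exact hL.1 _ _ _ _ (by simpa [emb, Fin.val_last] using p.1.isLt)
    rw [Finset.sum_congr rfl (fun k' _ => hlastzero k'), Finset.sum_const_zero, add_zero] at h0
    rw [Matrix.zero_apply, Matrix.mul_apply, ← h0]
    refine Finset.sum_congr rfl fun c _ => ?_
    rw [HU_small j s U hU c k]
    rfl
  -- diagonal formula
  have hdiag' : A = (x * H₀ + crow j s) * y + x * bcol j s + s ((j+1) + (j+1)) := by
    ext i k
    rw [← hdiag i k, Matrix.mul_apply, sum_split]
    have hlast : ∀ k', (L * hankSq q s (j+1)) (Fin.last (j+1), i) (Fin.last (j+1), k') *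
        U (Fin.last (j+1), k') (Fin.last (j+1), k) =
        if k' = k then (L * hankSq q s (j+1)) (Fin.last (j+1), i) (Fin.last (j+1), k') else 0 := by
      intro k'
      rw [hU.2 _ k' k]
      by_cases h : k' = k <;> simp [h]
    rw [Finset.sum_congr rfl (fun k' _ => hlast k'), Finset.sum_ite_eq' Finset.univ k
      (fun k' => (L * hankSq q s (j+1)) (Fin.last (j+1), i) (Fin.last (j+1), k'))]
    simp only [Finset.mem_univ, if_true]
    rw [LH_last j s L hL i k]
    have hsmall : ∀ c, (L * hankSq q s (j+1)) (Fin.last (j+1), i) (emb (Nat.le_succ j) c) *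
        U (emb (Nat.le_succ j) c) (Fin.last (j+1), k) =
        (x * H₀ + crow j s) i c * y c k := by
      intro c
      rw [LH_small j s L hL i c]
      rfl
    rw [Finset.sum_congr rfl (fun c _ => hsmall c)]
    simp only [Matrix.add_apply, Matrix.mul_apply]
    ring
  have hcrow : crow j s = -(x * H₀) := eq_neg_of_add_eq_zero_right hrow'
  have hbcol : bcol j s = -(H₀ * y) := eq_neg_of_add_eq_zero_right hcol'
  have hcrX : (Matrix.of fun (i : Fin q) (b : Fin (j+1) × Fin q) =>
      s ((j+1) + (b.1 : ℕ)) i b.2) = crow j s := rfl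
  have hbcX : (Matrix.of fun (a : Fin (j+1) × Fin q) (k : Fin q) =>
      s ((j+1) + (a.1 : ℕ)) a.2 k) = bcol j s := rfl
  have h2 : (2*(j+1)) = (j+1) + (j+1) := by ring
  have hmid : -(x * H₀) * X * -(H₀ * y) = x * (H₀ * y) := by
    rw [Matrix.neg_mul, Matrix.mul_neg, Matrix.neg_mul, neg_neg]
    rw [Matrix.mul_assoc (x * H₀) X (H₀ * y), Matrix.mul_assoc x H₀ (X * (H₀ * y)),
      ← Matrix.mul_assoc H₀ X (H₀ * y), ← Matrix.mul_assoc (H₀ * X) H₀ y, hX]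
  rw [hcrX, hbcX, hdiag', hcrow, hbcol, h2, hmid]
  rw [add_neg_cancel, Matrix.zero_mul, Matrix.mul_neg, zero_add]
  abel

end HankelProof

open HankelProof in
/-- If a Hankel nonnegative definite sequence has H_n equivalent to a block
diagonal matrix diag(A₀,…,A_n), then the diagonal blocks are the Schur
complements L_j. -/
theorem hankel_diag_unique {q : ℕ} (n : ℕ)
    (s : ℕ → Matrix (Fin q) (Fin q) ℂ)
    (hpsd : (hankSq q s n).PosSemidef)
    (Hinv : (j : ℕ) → Matrix (Fin (j+1) × Fin q) (Fin (j+1) × Fin q) ℂ)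
    (hHinv : ∀ j, j < n → IsMPInv (hankSq q s j) (Hinv j))
    (Lseq : ℕ → Matrix (Fin q) (Fin q) ℂ)
    (hL0 : Lseq 0 = s 0)
    (hLs : ∀ j, j < n → Lseq (j+1) =
      s (2 * (j+1)) -
        (Matrix.of fun (i : Fin q) (b : Fin (j+1) × Fin q) =>
          s ((j+1) + (b.1 : ℕ)) i b.2) *
        Hinv j *
        (Matrix.of fun (a : Fin (j+1) × Fin q) (k : Fin q) =>
          s ((j+1) + (a.1 : ℕ)) a.2 k))
    (A : ℕ → Matrix (Fin q) (Fin q) ℂ)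
    (hA : ∃ L U, BlockLowerUni L ∧ BlockUpperUni U ∧
      (Matrix.of fun (a b : Fin (n+1) × Fin q) =>
        if a.1 = b.1 then A (a.1 : ℕ) a.2 b.2 else 0) =
        L * hankSq q s n * U) :
    ∀ j, j ≤ n → A j = Lseq j := by
  obtain ⟨L, U, hL, hU, hfac⟩ := hA
  intro j hj
  -- restrict the factorization to level j
  have hres : (Matrix.of fun (a b : Fin (j+1) × Fin q) =>
      if (a.1 : ℕ) = (b.1 : ℕ) then A (a.1 : ℕ) a.2 b.2 else 0) =
      L.submatrix (emb hj) (emb hj) * hankSq q s j * U.submatrix (emb hj) (emb hj) := by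
    have h1 := congrArg (fun M => M.submatrix (emb (q := q) hj) (emb (q := q) hj)) hfac
    rw [submatrix_mul_emb_right hj _ U hU, submatrix_mul_emb_left hj L _ hL,
      hankSq_submatrix hj s] at h1
    rw [← h1]
    ext a b
    simp only [Matrix.submatrix_apply, Matrix.of_apply, emb]
    simp [Fin.ext_iff]
  match j, hj with
  | 0, hj =>
    -- at level 0 the unitriangular factors are the identity
    have hLid : L.submatrix (emb hj) (emb hj) = 1 :=
      lowerUni_one _ (lower_submatrix hj L hL)
    have hUid : U.submatrix (emb hj) (emb hj) = 1 :=
      upperUni_one _ (upper_submatrix hj U hU)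
    rw [hLid, hUid, Matrix.one_mul, Matrix.mul_one] at hres
    rw [hL0]
    ext i k
    have := congrFun (congrFun hres ((0 : Fin 1), i)) ((0 : Fin 1), k)
    simpa [hankSq] using this
  | (m+1), hj =>
    have hm : m < n := by omega
    rw [hLs m hm]
    refine key m s (L.submatrix (emb hj) (emb hj)) (U.submatrix (emb hj) (emb hj))
      (lower_submatrix hj L hL) (upper_submatrix hj U hU) (A (m+1)) ?_ ?_ ?_
      (Hinv m) (hHinv m hm).1
    · intro i k
      have := congrFun (congrFun hres.symm ((Fin.last (m+1)), i)) ((Fin.last (m+1)), k)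
      simpa using this
    · intro p i
      have := congrFun (congrFun hres.symm ((Fin.last (m+1)), i)) (emb (Nat.le_succ m) p)
      rw [this]
      have hne : ¬ ((Fin.last (m+1) : ℕ) = (((emb (q := q) (Nat.le_succ m) p).1 : Fin (m+1+1)) : ℕ)) := by
        simp only [Fin.val_last, emb, Fin.coe_castLE]
        omega
      simp only [Matrix.of_apply]
      rw [if_neg hne]
    · intro p k
      have := congrFun (congrFun hres.symm (emb (Nat.le_succ m) p)) ((Fin.last (m+1)), k)
      rw [this]
      have hne : ¬ ((((emb (q := q) (Nat.le_succ m) p).1 : Fin (m+1+1)) : ℕ) = (Fin.last (m+1) : ℕ)) := by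
        simp only [Fin.val_last, emb, Fin.coe_castLE]
        omega
      simp only [Matrix.of_apply]
      rw [if_neg hne]
end

section
/- Let κ ≥ 1, α < β real, and let (s_j)_{j=0}^κ be a sequence of complex p×q matrices dominated by its first term. Set a_j = s_{j+1} − α s_j and b_j = β s_j − s_{j+1}. Define the sequence (g_j)_{j=0}^{κ−1} by g₀ = −a₀ and g_j = −α b_{j−1} + b_j for 1 ≤ j ≤ κ−1 [this is the α-modification of the β-shifted sequence, equal to the '[α,β]-modification' construction], let (h_j) be its reciprocal sequence, let (x_j) be the Cauchy product of (b_j) with (h_j), and define the transformed sequence t_j = −a₀ s₀⁺ x_j a₀. Then t₀ = b₀ s₀⁺ a₀ a₀⁺ a₀ = 𝔡₁, where 𝔡₁ = −αβ s₀ + (α+β) s₁ − s₁ s₀⁺ s₁. -/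
open Matrix

private lemma eq_of_mulVec_eq {m n : Type*} [Fintype n] [DecidableEq n]
    {A B : Matrix m n ℂ} (h : ∀ v, A *ᵥ v = B *ᵥ v) : A = B := by
  ext i j
  have := congrFun (h (Pi.single j 1)) i
  simpa [Matrix.mulVec_single_one] using this

/-- If range B ⊆ range A and A X A = A then A X B = B. -/
private lemma range_absorb {m n k : Type*} [Fintype n] [Fintype m] [Fintype k] [DecidableEq k]
    {A : Matrix m n ℂ} {X : Matrix n m ℂ} {C : Matrix m k ℂ}
    (hr : LinearMap.range C.mulVecLin ≤ LinearMap.range A.mulVecLin)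
    (hA : A * X * A = A) : A * X * C = C := by
  apply eq_of_mulVec_eq
  intro v
  obtain ⟨y, hy⟩ := hr ⟨v, rfl⟩
  simp only [Matrix.mulVecLin_apply] at hy
  calc (A * X * C) *ᵥ v = (A * X) *ᵥ (C *ᵥ v) := by rw [← Matrix.mulVec_mulVec]
    _ = (A * X) *ᵥ (A *ᵥ y) := by rw [hy]
    _ = (A * X * A) *ᵥ y := by rw [Matrix.mulVec_mulVec]
    _ = A *ᵥ y := by rw [hA]
    _ = C *ᵥ v := hy

/-- If ker A ⊆ ker C and A X A = A then C X A = C. -/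
private lemma ker_absorb {m n k : Type*} [Fintype n] [Fintype m] [DecidableEq n]
    {A : Matrix m n ℂ} {X : Matrix n m ℂ} {C : Matrix k n ℂ}
    (hk : LinearMap.ker A.mulVecLin ≤ LinearMap.ker C.mulVecLin)
    (hA : A * X * A = A) : C * X * A = C := by
  apply eq_of_mulVec_eq
  intro v
  have hker : (X * A) *ᵥ v - v ∈ LinearMap.ker A.mulVecLin := by
    simp only [LinearMap.mem_ker, Matrix.mulVecLin_apply, Matrix.mulVec_sub,
      Matrix.mulVec_mulVec, ← Matrix.mul_assoc, hA, sub_self]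
  have hC := hk hker
  simp only [LinearMap.mem_ker, Matrix.mulVecLin_apply, Matrix.mulVec_sub,
    Matrix.mulVec_mulVec, sub_eq_zero] at hC
  calc (C * X * A) *ᵥ v = (C * (X * A)) *ᵥ v := by rw [Matrix.mul_assoc]
    _ = C *ᵥ ((X * A) *ᵥ v) := by rw [← Matrix.mulVec_mulVec]
    _ = C *ᵥ v := by rw [← Matrix.mulVec_mulVec] at hC; exact hC

/-- The first member of the [α,β]-transform of a sequence dominated by its
first term equals 𝔡₁: t₀ = b₀ s₀⁺ a₀ a₀⁺ a₀ = 𝔡₁. -/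
theorem abTransform_first_term {p q : ℕ} (κ : ℕ) (hκ : 1 ≤ κ)
    (α β : ℝ) (hαβ : α < β)
    (s : ℕ → Matrix (Fin p) (Fin q) ℂ)
    (hdom : ∀ j, j ≤ κ →
      LinearMap.range ((s j).mulVecLin) ≤ LinearMap.range ((s 0).mulVecLin) ∧
      LinearMap.ker ((s 0).mulVecLin) ≤ LinearMap.ker ((s j).mulVecLin))
    (sInv : Matrix (Fin q) (Fin p) ℂ) (hs : IsMPInv (s 0) sInv)
    (a b g : ℕ → Matrix (Fin p) (Fin q) ℂ)
    (ha : ∀ j, j + 1 ≤ κ → a j = s (j+1) - (α : ℂ) • s j)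
    (hb : ∀ j, j + 1 ≤ κ → b j = (β : ℂ) • s j - s (j+1))
    (hg0 : g 0 = -(a 0))
    (hg : ∀ j, 1 ≤ j → j ≤ κ - 1 → g j = -((α : ℂ) • b (j-1)) + b j)
    (gInv : Matrix (Fin q) (Fin p) ℂ) (hgInv : IsMPInv (g 0) gInv)
    (h : ℕ → Matrix (Fin q) (Fin p) ℂ)
    (hh0 : h 0 = gInv)
    (hh : ∀ j, 1 ≤ j → j ≤ κ - 1 →
      h j = -(gInv * ∑ ℓ ∈ Finset.range j, g (j - ℓ) * h ℓ))
    (x : ℕ → Matrix (Fin p) (Fin p) ℂ)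
    (hx : ∀ j, j ≤ κ - 1 → x j = ∑ ℓ ∈ Finset.range (j+1), b ℓ * h (j - ℓ))
    (t : ℕ → Matrix (Fin p) (Fin q) ℂ)
    (ht : ∀ j, j ≤ κ - 1 → t j = -(a 0 * sInv * x j * a 0))
    (aInv : Matrix (Fin q) (Fin p) ℂ) (haInv : IsMPInv (a 0) aInv) :
    t 0 = b 0 * sInv * a 0 * aInv * a 0 ∧
    t 0 = -(((α * β : ℝ) : ℂ) • s 0) + ((α + β : ℝ) : ℂ) • s 1 - s 1 * sInv * s 1 := by
  have ha0 : a 0 = s 1 - (α : ℂ) • s 0 := ha 0 hκ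
  have hb0 : b 0 = (β : ℂ) • s 0 - s 1 := hb 0 hκ
  have hS : s 0 * sInv * s 0 = s 0 := hs.1
  have hAB : s 0 * sInv * s 1 = s 1 := range_absorb (hdom 1 hκ).1 hS
  have hBA : s 1 * sInv * s 0 = s 1 := ker_absorb (hdom 1 hκ).2 hS
  -- D = a0 sInv b0 = b0 sInv a0 = 𝔡₁
  set D : Matrix (Fin p) (Fin q) ℂ :=
    -(((α : ℂ) * (β : ℂ)) • s 0) + ((α : ℂ) + (β : ℂ)) • s 1 - s 1 * sInv * s 1 with hD
  have key1 : a 0 * sInv * b 0 = D := by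
    rw [ha0, hb0, hD]
    simp only [Matrix.sub_mul, Matrix.mul_sub, Matrix.smul_mul, Matrix.mul_smul, smul_smul]
    rw [hAB, hBA, hS]
    module
  have key2 : b 0 * sInv * a 0 = D := by
    rw [ha0, hb0, hD]
    simp only [Matrix.sub_mul, Matrix.mul_sub, Matrix.smul_mul, Matrix.mul_smul, smul_smul]
    rw [hAB, hBA, hS]
    module
  have hx0 : x 0 = b 0 * gInv := by
    rw [hx 0 (Nat.zero_le _)]
    simp [hh0]
  have ht0 : t 0 = D := by
    rw [ht 0 (Nat.zero_le _), hx0]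
    have hGa : g 0 * gInv * g 0 = g 0 := hgInv.1
    rw [hg0] at hGa
    have hGa' : a 0 * (gInv * a 0) = -(a 0) := by
      simpa [Matrix.neg_mul, Matrix.mul_neg, Matrix.mul_assoc] using hGa
    calc -(a 0 * sInv * (b 0 * gInv) * a 0)
        = -((a 0 * sInv * b 0) * (gInv * a 0)) := by simp only [Matrix.mul_assoc]
      _ = -((b 0 * sInv * a 0) * (gInv * a 0)) := by rw [key1, key2]
      _ = -((b 0 * sInv) * (a 0 * (gInv * a 0))) := by simp only [Matrix.mul_assoc]
      _ = -((b 0 * sInv) * (-(a 0))) := by rw [hGa']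
      _ = b 0 * sInv * a 0 := by simp [Matrix.mul_neg, Matrix.mul_assoc]
      _ = D := key2
  constructor
  · rw [ht0]
    calc D = b 0 * sInv * a 0 := key2.symm
      _ = b 0 * sInv * (a 0 * aInv * a 0) := by rw [haInv.1]
      _ = b 0 * sInv * a 0 * aInv * a 0 := by simp only [Matrix.mul_assoc]
  · rw [ht0, hD]
    push_cast
    ring_nf
end
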